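/- arXiv:cs/0201008 — 4 statements merged into one kernel-verified Lean document; each statement's English description precedes it below -/
import Mathlib

section
/- If L ⊆ Σ* is the language recognised by a finite (string) automaton (Σ, Q, Q_f, q₀, δ), then the string tree language ⟨L⟩ = {⟨s⟩ | s ∈ L} is recognised by the NFSTA (Σ, Q ∪ Σ, Q_f, q₀, δ), where δ is extended so that δ(q₁, q₂) = ∅ for all q₁, q₂ ∈ Q. -/
/-!  Common definitions: string trees over an alphabet (following
N. Schmidt, A. Patel, "Using Tree Automata and Regular Expressions to
Manipulate Hierarchically Structured Data").

Symbols: an ambient type `U` of "plain" symbols, extended with the two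
angle brackets and the slash. -/

inductive TSym (U : Type) : Type where
  | op : TSym U          -- ⟨
  | cl : TSym U          -- ⟩
  | slash : TSym U       -- /
  | ltr : U → TSym U     -- a plain symbol

namespace StringTree

variable {U V : Type}

/-- The letters of an alphabet `S ⊆ U`, viewed as (non-bracket) symbols. -/
def ltrs (S : Set U) : Set (TSym U) := {x | ∃ a ∈ S, x = TSym.ltr a}

/-- String trees over a set `S` of allowed non-bracket symbols:
`⟨⟩ ∈ T`, `⟨a⟩ ∈ T` for `a ∈ S`, closed under concatenation
`⟨x⟩·⟨y⟩ = ⟨xy⟩` and encapsulation `t ↦ ⟨t⟩`. -/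
inductive IsTree (S : Set (TSym U)) : List (TSym U) → Prop where
  | nil : IsTree S [TSym.op, TSym.cl]
  | single {x : TSym U} : x ∈ S → IsTree S [TSym.op, x, TSym.cl]
  | concat {x y : List (TSym U)} :
      IsTree S (TSym.op :: (x ++ [TSym.cl])) → IsTree S (TSym.op :: (y ++ [TSym.cl])) →
      IsTree S (TSym.op :: ((x ++ y) ++ [TSym.cl]))
  | encap {t : List (TSym U)} : IsTree S t → IsTree S (TSym.op :: (t ++ [TSym.cl]))

/-- `T(Σ)`, the set of string trees over the alphabet `Σ ⊆ U`. -/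
def TreeSet (S : Set U) : Set (List (TSym U)) := {t | IsTree (ltrs S) t}

/-- A plain string, viewed as a string of symbols. -/
def strOf (s : List U) : List (TSym U) := s.map TSym.ltr

/-- Move relation of a generalised non-deterministic finite string tree
automaton with initial states `Q0`, horizontal rules `Δ` and vertical
rules `γ`:
(a) `l⟨s⟩r ⇒ l⟨a/s⟩r` if `a ∈ Q0` (initial state assignment);
(b) `l⟨a/bs⟩r ⇒ l⟨c/s⟩r` if `(a,b) → c ∈ Δ` (horizontal move);
(c) `l⟨a/⟩r ⇒ lbr` if `b ∈ γ a` (vertical move). -/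
inductive GMove (Q0 : Set U) (Δ : Set (U × U × U)) (γ : U → Set U) :
    List (TSym U) → List (TSym U) → Prop where
  | init {l r : List (TSym U)} {s : List U} {a : U} :
      a ∈ Q0 →
      GMove Q0 Δ γ (l ++ [TSym.op] ++ strOf s ++ [TSym.cl] ++ r)
        (l ++ [TSym.op, TSym.ltr a, TSym.slash] ++ strOf s ++ [TSym.cl] ++ r)
  | horiz {l r : List (TSym U)} {s : List U} {a b c : U} :
      (a, b, c) ∈ Δ →
      GMove Q0 Δ γ (l ++ [TSym.op, TSym.ltr a, TSym.slash, TSym.ltr b] ++ strOf s ++ [TSym.cl] ++ r)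
        (l ++ [TSym.op, TSym.ltr c, TSym.slash] ++ strOf s ++ [TSym.cl] ++ r)
  | vert {l r : List (TSym U)} {a b : U} :
      b ∈ γ a →
      GMove Q0 Δ γ (l ++ [TSym.op, TSym.ltr a, TSym.slash, TSym.cl] ++ r)
        (l ++ [TSym.ltr b] ++ r)

/-- Move relation of an NFSTA: the GNFSTA moves with the single initial
state `q0` and with the vertical move `l⟨a/⟩r ⇒ lar`. -/
def NMove (q0 : U) (Δ : Set (U × U × U)) : List (TSym U) → List (TSym U) → Prop :=
  GMove {q0} Δ (fun a => {a})

/-- The final tree `⟨q/⟩`. -/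
def finalTree (q : U) : List (TSym U) := [TSym.op, TSym.ltr q, TSym.slash, TSym.cl]

/-- Acceptance by a GNFSTA: `t ⇒* ⟨q_f/⟩` for some `q_f ∈ Q_f`. -/
def GAccepts (Q0 : Set U) (Δ : Set (U × U × U)) (γ : U → Set U) (Qf : Set U)
    (t : List (TSym U)) : Prop :=
  ∃ qf ∈ Qf, Relation.ReflTransGen (GMove Q0 Δ γ) t (finalTree qf)

/-- The language of a GNFSTA: the set of trees of `T(Σ)` it accepts. -/
def GLang (Sa Q0 : Set U) (Δ : Set (U × U × U)) (γ : U → Set U) (Qf : Set U) :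
    Set (List (TSym U)) :=
  {t | t ∈ TreeSet Sa ∧ GAccepts Q0 Δ γ Qf t}

/-- Acceptance by an NFSTA. -/
def NAccepts (q0 : U) (Δ : Set (U × U × U)) (Qf : Set U) (t : List (TSym U)) : Prop :=
  GAccepts {q0} Δ (fun a => {a}) Qf t

/-- The language of an NFSTA. -/
def NLang (Sa : Set U) (q0 : U) (Δ : Set (U × U × U)) (Qf : Set U) : Set (List (TSym U)) :=
  GLang Sa {q0} Δ (fun a => {a}) Qf

/-- Well-formedness of a GNFSTA `(Σ, Q, Q_f, Q₀, Δ, γ)`: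
`Q` is finite, `Σ ⊆ Q`, `Q_f ⊆ Q`, `Q₀ ⊆ Q`, the rules of `Δ` are over `Q`,
and `γ` maps states of `Q` to sets of states of `Q`. -/
def GWF (Sa Q Qf Q0 : Set U) (Δ : Set (U × U × U)) (γ : U → Set U) : Prop :=
  Q.Finite ∧ Sa ⊆ Q ∧ Qf ⊆ Q ∧ Q0 ⊆ Q ∧
    (∀ p ∈ Δ, p.1 ∈ Q ∧ p.2.1 ∈ Q ∧ p.2.2 ∈ Q) ∧ (∀ q ∈ Q, γ q ⊆ Q)

/-- Well-formedness of an NFSTA `(Σ, Q, Q_f, q₀, Δ)`. -/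
def NWF (Sa Q Qf : Set U) (q0 : U) (Δ : Set (U × U × U)) : Prop :=
  Q.Finite ∧ Sa ⊆ Q ∧ Qf ⊆ Q ∧ q0 ∈ Q ∧ ∀ p ∈ Δ, p.1 ∈ Q ∧ p.2.1 ∈ Q ∧ p.2.2 ∈ Q

/-- A GNFSTA has pure states: no horizontal or vertical rule produces a
symbol of `Σ`, no horizontal rule has its state (first) component in `Σ`,
`γ(a) = ∅` for `a ∈ Σ`, and `Q₀ ∪ Q_f ⊆ Q ∖ Σ`. -/
def PureG (Sa Q Qf Q0 : Set U) (Δ : Set (U × U × U)) (γ : U → Set U) : Prop :=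
  (∀ p ∈ Δ, p.1 ∉ Sa ∧ p.2.2 ∉ Sa) ∧ (∀ a ∈ Sa, γ a = ∅) ∧
    (∀ q : U, ∀ p ∈ γ q, p ∉ Sa) ∧ Q0 ⊆ Q \ Sa ∧ Qf ⊆ Q \ Sa

/-- An NFSTA has pure states. -/
def PureN (Sa Q Qf : Set U) (q0 : U) (Δ : Set (U × U × U)) : Prop :=
  (∀ p ∈ Δ, p.1 ∉ Sa ∧ p.2.2 ∉ Sa) ∧ q0 ∈ Q \ Sa ∧ Qf ⊆ Q \ Sa


/-! Additional notions. -/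

/-- `⟨s₀ t₁ s₁ ⋯ tₙ sₙ⟩`: the string tree assembled from a head string `s₀`
and a list of pairs `(tᵢ, sᵢ)` of a subtree and a following string. -/
def flatRep (s0 : List U) (rest : List (List (TSym U) × List U)) : List (TSym U) :=
  TSym.op :: (strOf s0 ++ (rest.map (fun p => p.1 ++ strOf p.2)).flatten ++ [TSym.cl])

/-- The inner string of a tree `⟨x⟩`, i.e. `x`. -/
def innerStr (t : List (TSym U)) : List (TSym U) := (t.drop 1).dropLast

/-- Tree concatenation `⟨x⟩·⟨y⟩ = ⟨xy⟩`. -/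
def tconc (u v : List (TSym U)) : List (TSym U) :=
  TSym.op :: ((innerStr u ++ innerStr v) ++ [TSym.cl])

/-- The null tree `⟨⟩`. -/
def nilTree : List (TSym U) := [TSym.op, TSym.cl]

/-- `w` is a string over `Q ∪ {/}`. -/
def OverQSlash (Q : Set U) (w : List (TSym U)) : Prop :=
  ∀ x ∈ w, x = TSym.slash ∨ ∃ q ∈ Q, x = TSym.ltr q

/-- Renaming of symbols along a map of plain symbols. -/
def symRel (f : U → V) : TSym U → TSym V
  | TSym.op => TSym.op
  | TSym.cl => TSym.cl
  | TSym.slash => TSym.slash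
  | TSym.ltr a => TSym.ltr (f a)

/-- Renaming of the symbols of a tree along a map of plain symbols. -/
def treeRel (f : U → V) (t : List (TSym U)) : List (TSym V) := t.map (symRel f)

/-- The injective renaming `a ↦ {a}`. -/
def sing : U → Set U := fun a => {a}

/-- The vertical-rule function `γ` of a pure-state GNFSTA, extended by
`γ(a) = {a}` for `a ∈ Σ` and to sets by unions: `γ(b') = ⋃_{b ∈ b'} γ(b)`. -/
def gammaExt (Sa : Set U) (γ : U → Set U) (b' : Set U) : Set U :=
  {c | ∃ b ∈ b', c ∈ γ b ∨ (c = b ∧ b ∈ Sa)}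

/-- The transition function of the subset construction:
`Δ'(a', b') = {c | (a,b) → c ∈ Δ, a ∈ a', b ∈ γ(b')}`. -/
def subsetDelta (Sa : Set U) (γ : U → Set U) (Δ : Set (U × U × U)) (a' b' : Set U) : Set U :=
  {c | ∃ a ∈ a', ∃ b ∈ gammaExt Sa γ b', (a, b, c) ∈ Δ}

/-- The rule set of the subset-construction DFSTA, defined on pairs of
subsets of `Q`. -/
def subsetRules (Sa : Set U) (γ : U → Set U) (Δ : Set (U × U × U)) (Q : Set U) :
    Set (Set U × Set U × Set U) :=
  {x | x.1 ⊆ Q ∧ x.2.1 ⊆ Q ∧ x.2.2 = subsetDelta Sa γ Δ x.1 x.2.1}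

/-- A rule set is deterministic: at most one rule per left-hand side. -/
def Deterministic {α : Type} (Δ : Set (α × α × α)) : Prop :=
  ∀ a b c₁ c₂, (a, b, c₁) ∈ Δ → (a, b, c₂) ∈ Δ → c₁ = c₂

/-- `L` is recognised by some GNFSTA over the alphabet `Sa`. -/
def RecogG (Sa : Set U) (L : Set (List (TSym U))) : Prop :=
  ∃ Q Qf Q0 Δ γ, GWF Sa Q Qf Q0 Δ γ ∧ GLang Sa Q0 Δ γ Qf = L

/-- `L` is recognised by some NFSTA over the alphabet `Sa`. -/
def RecogN (Sa : Set U) (L : Set (List (TSym U))) : Prop :=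
  ∃ Q Qf q0 Δ, NWF Sa Q Qf q0 Δ ∧ NLang Sa q0 Δ Qf = L

/-- `L` is recognised, after the injective alphabet renaming `a ↦ {a}`,
by some deterministic FSTA. -/
def RecogD (Sa : Set U) (L : Set (List (TSym U))) : Prop :=
  ∃ (Q' Qf' : Set (Set U)) (q0' : Set U) (Δ' : Set (Set U × Set U × Set U)),
    NWF (sing '' Sa) Q' Qf' q0' Δ' ∧ Deterministic Δ' ∧
    NLang (sing '' Sa) q0' Δ' Qf' = treeRel sing '' L

/-- Runs of a classical finite (string) automaton with transition map `δ`. -/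
inductive FASteps (δ : U → U → Set U) : U → List U → U → Prop where
  | nil (q : U) : FASteps δ q [] q
  | cons {q a p s q'} : p ∈ δ q a → FASteps δ p s q' → FASteps δ q (a :: s) q'

/-- The language of a classical finite automaton `(Sa, Q, Q_f, q₀, δ)`. -/
def FALang (Sa : Set U) (δ : U → U → Set U) (q0 : U) (Qf : Set U) : Set (List U) :=
  {s | (∀ a ∈ s, a ∈ Sa) ∧ ∃ qf ∈ Qf, FASteps δ q0 s qf}

/-- `n`-fold composition of a relation: `relPow r n a b` iff `a ⇒ⁿ b`. -/
def relPow {α : Type} (r : α → α → Prop) : ℕ → α → α → Prop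
  | 0, a, b => a = b
  | n + 1, a, c => ∃ b, r a b ∧ relPow r n b c


/-! Ranked terms and classical tree automata. -/

/-- Unranked terms (rose trees) over a symbol type `F`. -/
inductive PreTerm (F : Type) : Type where
  | node : F → List (PreTerm F) → PreTerm F

/-- A term is well-ranked w.r.t. an arity function. -/
inductive WellRanked {F : Type} (ar : F → ℕ) : PreTerm F → Prop where
  | node {f : F} {ts : List (PreTerm F)} : ts.length = ar f →
      (∀ t ∈ ts, WellRanked ar t) → WellRanked ar (PreTerm.node f ts)

/-- The term-to-string-tree map `τ`:
`τ(f(t₁,…,t_p)) = ⟨f τ(t₁) ⋯ τ(t_p)⟩` (and `τ(a) = ⟨a⟩` for constants). -/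
def tau {F : Type} : PreTerm F → List (TSym F)
  | PreTerm.node f ts =>
      TSym.op :: TSym.ltr f :: ((ts.attach.map (fun x => tau x.1)).flatten ++ [TSym.cl])
  decreasing_by
    simp only [PreTerm.node.sizeOf_spec]
    have h := List.sizeOf_lt_of_mem x.2
    omega

/-- A term over the ranked alphabet given by symbols `Sa` and arities `ar`. -/
inductive GoodTerm (Sa : Set U) (ar : U → ℕ) : PreTerm U → Prop where
  | node {f : U} {ts : List (PreTerm U)} : f ∈ Sa → ts.length = ar f →
      (∀ t ∈ ts, GoodTerm Sa ar t) → GoodTerm Sa ar (PreTerm.node f ts)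

/-- Bottom-up runs of a classical tree automaton with rules
`f(q₁,…,qₙ) → q`: `CRun Δh t q` means the run assigns state `q` to `t`. -/
inductive CRun (Δh : Set (U × List U × U)) : PreTerm U → U → Prop where
  | node {f : U} {ts : List (PreTerm U)} {qs : List U} {q : U} :
      (f, qs, q) ∈ Δh → qs.length = ts.length →
      (∀ p ∈ ts.zip qs, CRun Δh p.1 p.2) →
      CRun Δh (PreTerm.node f ts) q

/-- The term language of a classical tree automaton. -/
def TermLang (Sa : Set U) (ar : U → ℕ) (Δh : Set (U × List U × U)) (Qhf : Set U) :
    Set (PreTerm U) :=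
  {t | GoodTerm Sa ar t ∧ ∃ q ∈ Qhf, CRun Δh t q}

/-! Vertical tree representation of strings. -/

def omegaRev : List U → List (TSym U)
  | [] => [TSym.op, TSym.cl]
  | a :: s => TSym.op :: (omegaRev s ++ [TSym.ltr a, TSym.cl])

/-- The vertical tree representation `ω(a₁⋯aₙ) = ⟨⟨⋯⟨⟩a₁⟩a₂⟩⋯aₙ⟩`,
defined by `ω(ε) = ⟨⟩` and `ω(sa) = ⟨ω(s)⟩·⟨a⟩`. -/
def omega (s : List U) : List (TSym U) := omegaRev s.reverse

/-! Regular string tree grammars. -/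

/-- A regular expression is over the symbol set `S`. -/
def REOver (S : Set U) : RegularExpression U → Prop
  | RegularExpression.zero => True
  | RegularExpression.epsilon => True
  | RegularExpression.char a => a ∈ S
  | RegularExpression.plus e₁ e₂ => REOver S e₁ ∧ REOver S e₂
  | RegularExpression.comp e₁ e₂ => REOver S e₁ ∧ REOver S e₂
  | RegularExpression.star e => REOver S e

/-- One derivation step of a regular string tree grammar with rule set `R`:
`lXr →_G l⟨x⟩r` whenever `X → ⟨e⟩ ∈ R` and `x ∈ ⟦e⟧`. -/
def GDeriv (R : Set (U × RegularExpression U)) (u v : List (TSym U)) : Prop :=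
  ∃ (l r : List (TSym U)) (X : U) (e : RegularExpression U) (x : List U),
    (X, e) ∈ R ∧ x ∈ e.matches' ∧
    u = l ++ [TSym.ltr X] ++ r ∧ v = l ++ (TSym.op :: (strOf x ++ [TSym.cl])) ++ r

/-- The language generated by a regular string tree grammar with axiom `S`:
all trees of `T(Σ)` derivable from `S`. -/
def GramLang (Sa : Set U) (S : U) (R : Set (U × RegularExpression U)) :
    Set (List (TSym U)) :=
  {t | t ∈ TreeSet Sa ∧ Relation.ReflTransGen (GDeriv R) [TSym.ltr S] t}

/-- Well-formedness of a regular string tree grammar `(Σ, N, S, R)`. -/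
def GramWF (Sa N : Set U) (S : U) (R : Set (U × RegularExpression U)) : Prop :=
  N.Finite ∧ Disjoint N Sa ∧ S ∈ N ∧ ∀ p ∈ R, p.1 ∈ N ∧ REOver (Sa ∪ N) p.2

/-! The map `Γ` and the instance relation `⊴` of the subset-construction
equivalence proof. -/

/-- `Γ` applies (the extension of) `γ` to every set-symbol that is not
immediately followed by a slash:
`Γ(ε)=ε`, `Γ(⟨s)=⟨Γ(s)`, `Γ(⟩s)=⟩Γ(s)`, `Γ(a/s)=a/Γ(s)`, `Γ(as)=γ(a)Γ(s)`. -/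
def GammaMap (g : Set U → Set U) : List (TSym (Set U)) → List (TSym (Set U))
  | [] => []
  | TSym.op :: s => TSym.op :: GammaMap g s
  | TSym.cl :: s => TSym.cl :: GammaMap g s
  | TSym.slash :: s => TSym.slash :: GammaMap g s
  | TSym.ltr a :: TSym.slash :: s => TSym.ltr a :: TSym.slash :: GammaMap g s
  | TSym.ltr a :: s => TSym.ltr (g a) :: GammaMap g s

/-- Symbol-wise instance relation: brackets and slashes match, and a plain
symbol is an element of the corresponding set-symbol. -/
inductive SymInst : TSym U → TSym (Set U) → Prop where
  | op : SymInst TSym.op TSym.op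
  | cl : SymInst TSym.cl TSym.cl
  | slash : SymInst TSym.slash TSym.slash
  | ltr {a : U} {A : Set U} : a ∈ A → SymInst (TSym.ltr a) (TSym.ltr A)

/-- `v ⊴ v'`: `v` is an instance of `v'`. -/
def Inst (v : List (TSym U)) (v' : List (TSym (Set U))) : Prop :=
  List.Forall₂ SymInst v v'

end StringTree

namespace StringTree

/-- The NFSTA rule set obtained from a classical FA transition map `δ`
(extended by `δ(q₁, q₂) = ∅` for pairs of states): `(q, a) → p` iff
`p ∈ δ(q, a)`. -/
def faRules {U : Type} (δ : U → U → Set U) : Set (U × U × U) :=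
  {p | p.2.2 ∈ δ p.1 p.2.1}

/-! A tree accepted by the automaton is flat. Give `⟨` weight `1`, `/` weight `-1`, letters
outside `Σ` weight `1` and everything else weight `0`. Since `q₀` and all states produced by `δ`
lie outside `Σ` while `δ` only consumes letters of `Σ`, every move preserves the total weight.
A tree of `T(Σ)` weighs one more than the number of its inner brackets `⟨`, while `⟨q_f/⟩` weighs
at most `1`. On a flat tree `⟨s⟩` the only run assigns `q₀` and then follows `δ` along `s`. -/

variable {U : Type}

def flatTree (s : List U) : List (TSym U) := TSym.op :: (strOf s ++ [TSym.cl])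

def activeTree (q : U) (s : List U) : List (TSym U) :=
  TSym.op :: TSym.ltr q :: TSym.slash :: (strOf s ++ [TSym.cl])

lemma strOf_injective : Function.Injective (strOf : List U → List (TSym U)) :=
  List.map_injective_iff.2 fun _ _ h => TSym.ltr.inj h

lemma cl_notMem_strOf (s : List U) : TSym.cl ∉ strOf s := by simp [strOf]

lemma eq_nil_of_append_cons_eq_cons {α : Type*} {l x y : List α} {a : α} (ha : a ∉ y)
    (h : l ++ a :: x = a :: y) : l = [] ∧ x = y := by
  obtain ⟨hl, -, hx⟩ :=
    (List.append_cons_inj_of_notMem List.not_mem_nil ha).1 (h.symm : [] ++ a :: y = _)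
  exact ⟨hl.symm, hx.symm⟩

lemma strOf_append_cl_eq_iff {s s' : List U} {r : List (TSym U)} :
    strOf s ++ [TSym.cl] = strOf s' ++ TSym.cl :: r ↔ s = s' ∧ r = [] := by
  rw [List.append_cons_inj_of_notMem (cl_notMem_strOf s) List.not_mem_nil,
    strOf_injective.eq_iff]
  simp [eq_comm]

noncomputable def symWeight (Sa : Set U) : TSym U → ℤ
  | TSym.op => 1
  | TSym.cl => 0
  | TSym.slash => -1
  | TSym.ltr a => Saᶜ.indicator 1 a

noncomputable def weight (Sa : Set U) (w : List (TSym U)) : ℤ := (w.map (symWeight Sa)).sum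

section Weight
variable {Sa : Set U}

@[simp] lemma weight_nil : weight Sa [] = 0 := rfl

@[simp] lemma weight_cons (x : TSym U) (w : List (TSym U)) :
    weight Sa (x :: w) = symWeight Sa x + weight Sa w := List.sum_cons

@[simp] lemma weight_append (v w : List (TSym U)) :
    weight Sa (v ++ w) = weight Sa v + weight Sa w := by
  simp [weight]

lemma weight_finalTree_le_one (q : U) : weight Sa (finalTree q) ≤ 1 := by
  by_cases hq : q ∈ Sa <;> simp [finalTree, symWeight, hq]

lemma weight_eq_of_nMove {q0 : U} {Δ : Set (U × U × U)} (hq0 : q0 ∉ Sa)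
    (hΔ : ∀ a b c, (a, b, c) ∈ Δ → a ∉ Sa ∧ b ∈ Sa ∧ c ∉ Sa) {w w' : List (TSym U)}
    (h : NMove q0 Δ w w') : weight Sa w' = weight Sa w := by
  cases h with
  | init ha => simp [Set.mem_singleton_iff.1 ha, symWeight, hq0]
  | horiz hr =>
    obtain ⟨ha, hb, hc⟩ := hΔ _ _ _ hr
    simp [symWeight, ha, hb, hc]
  | vert hb =>
    simp only [Set.mem_singleton_iff.1 hb, List.append_assoc, List.cons_append, weight_append,
      weight_cons, symWeight]
    ring

lemma weight_eq_of_reflTransGen {q0 : U} {Δ : Set (U × U × U)} (hq0 : q0 ∉ Sa)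
    (hΔ : ∀ a b c, (a, b, c) ∈ Δ → a ∉ Sa ∧ b ∈ Sa ∧ c ∉ Sa) {w w' : List (TSym U)}
    (h : Relation.ReflTransGen (NMove q0 Δ) w w') : weight Sa w' = weight Sa w := by
  induction h with
  | refl => rfl
  | tail _ hstep ih => exact (weight_eq_of_nMove hq0 hΔ hstep).trans ih

lemma IsTree.one_le_weight {t : List (TSym U)} (h : IsTree (ltrs Sa) t) : 1 ≤ weight Sa t := by
  induction h with
  | nil => simp [symWeight]
  | single hx =>
    obtain ⟨a, ha, rfl⟩ := hx
    simp [symWeight, ha]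
  | concat _ _ ihx ihy =>
    simp only [List.append_assoc, weight_cons, weight_append, weight_nil, symWeight] at ihx ihy ⊢
    omega
  | encap _ ih =>
    simp only [weight_cons, weight_append, weight_nil, symWeight]
    omega

lemma IsTree.exists_eq_flatTree {t : List (TSym U)} (h : IsTree (ltrs Sa) t)
    (hw : weight Sa t ≤ 1) : ∃ s, (∀ a ∈ s, a ∈ Sa) ∧ t = flatTree s := by
  induction h with
  | nil => exact ⟨[], by simp, rfl⟩
  | single hx =>
    obtain ⟨a, ha, rfl⟩ := hx
    exact ⟨[a], by simpa using ha, rfl⟩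
  | concat hx hy ihx ihy =>
    have h1x := hx.one_le_weight
    have h1y := hy.one_le_weight
    simp only [List.append_assoc, weight_cons, weight_append, weight_nil, symWeight]
      at hw h1x h1y ihx ihy
    obtain ⟨s₁, hs₁, hx⟩ := ihx (by omega)
    obtain ⟨s₂, hs₂, hy⟩ := ihy (by omega)
    simp only [flatTree, List.cons.injEq, List.append_cancel_right_eq, true_and] at hx hy
    subst hx hy
    refine ⟨s₁ ++ s₂, fun a ha => ?_, by simp [flatTree, strOf]⟩
    exact (List.mem_append.1 ha).elim (hs₁ a) (hs₂ a)
  | encap ht =>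
    have := ht.one_le_weight
    simp only [weight_cons, weight_append, weight_nil, symWeight] at hw
    omega

lemma isTree_flatTree {s : List U} (hs : ∀ a ∈ s, a ∈ Sa) : IsTree (ltrs Sa) (flatTree s) := by
  induction s with
  | nil => exact .nil
  | cons a s ih =>
    have hhead : IsTree (ltrs Sa) (TSym.op :: ([TSym.ltr a] ++ [TSym.cl])) :=
      .single ⟨a, hs a List.mem_cons_self, rfl⟩
    simpa [flatTree, strOf] using hhead.concat (ih fun b hb => hs b (List.mem_cons_of_mem a hb))

end Weight

section Moves
variable {q0 : U} {Δ : Set (U × U × U)} {w : List (TSym U)}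

lemma nMove_flatTree {s : List U} (h : NMove q0 Δ (flatTree s) w) : w = activeTree q0 s := by
  generalize hsrc : flatTree s = v at h
  cases h <;> simp only [flatTree, List.append_assoc, List.cons_append] at hsrc <;>
    obtain ⟨rfl, hinner⟩ := eq_nil_of_append_cons_eq_cons (by simp [strOf]) hsrc.symm <;>
    simp only [List.nil_append] at hinner
  case init ha =>
    obtain ⟨rfl, rfl⟩ := strOf_append_cl_eq_iff.1 hinner.symm
    simp [Set.mem_singleton_iff.1 ha, activeTree]
  all_goals simpa [strOf] using congrArg (TSym.slash ∈ ·) hinner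

lemma nMove_activeTree {q : U} {s : List U} (h : NMove q0 Δ (activeTree q s) w) :
    (∃ a s' p, s = a :: s' ∧ (q, a, p) ∈ Δ ∧ w = activeTree p s') ∨
      (s = [] ∧ w = [TSym.ltr q]) := by
  generalize hsrc : activeTree q s = v at h
  cases h <;> simp only [activeTree, List.append_assoc, List.cons_append] at hsrc <;>
    obtain ⟨rfl, hinner⟩ := eq_nil_of_append_cons_eq_cons (by simp [strOf]) hsrc.symm <;>
    simp only [List.nil_append, List.cons.injEq, TSym.ltr.injEq, true_and] at hinner
  case init s' _ _ =>
    rcases s' with _ | ⟨b, _ | ⟨c, s'⟩⟩ <;> simp [strOf] at hinner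
  case horiz r s' a b p hrule =>
    obtain ⟨rfl, hinner⟩ := hinner
    rcases s with _ | ⟨b', s⟩
    · simp [strOf] at hinner
    simp only [strOf, List.map_cons, List.cons_append, List.cons.injEq, TSym.ltr.injEq] at hinner
    obtain ⟨rfl, hinner⟩ := hinner
    obtain ⟨rfl, rfl⟩ := strOf_append_cl_eq_iff.1 hinner.symm
    exact Or.inl ⟨b, _, p, rfl, hrule, by simp [activeTree]⟩
  case vert r a b hb =>
    obtain ⟨rfl, hinner⟩ := hinner
    rcases s with _ | ⟨b', s⟩ <;> simp only [strOf, List.map_nil, List.map_cons, List.nil_append,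
      List.cons_append, List.cons.injEq, reduceCtorEq, false_and] at hinner
    obtain rfl := hinner.2
    exact Or.inr ⟨rfl, by simp [Set.mem_singleton_iff.1 hb]⟩

lemma not_nMove_singleton (q : U) : ¬ NMove q0 Δ [TSym.ltr q] w := by
  intro h
  generalize hsrc : [TSym.ltr q] = v at h
  cases h <;> simpa using congrArg (TSym.op ∈ ·) hsrc

end Moves

section Runs
variable {q0 : U} {δ : U → U → Set U}

lemma reflTransGen_activeTree_of_faSteps {q qf : U} {s : List U} (h : FASteps δ q s qf) :
    Relation.ReflTransGen (NMove q0 (faRules δ)) (activeTree q s) (finalTree qf) := by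
  induction h with
  | nil q => rfl
  | cons hp _ ih =>
    refine .head ?_ ih
    simpa [activeTree, NMove, strOf] using
      GMove.horiz (Q0 := {q0}) (γ := fun a => {a}) (l := []) (r := []) (show _ ∈ faRules δ from hp)

lemma faSteps_of_reflTransGen_activeTree {q qf : U} {s : List U}
    (h : Relation.ReflTransGen (NMove q0 (faRules δ)) (activeTree q s) (finalTree qf)) :
    FASteps δ q s qf := by
  generalize hw : activeTree q s = w at h
  induction h using Relation.ReflTransGen.head_induction_on generalizing q s with
  | refl =>
    rcases s with _ | ⟨a, s⟩ <;> simp [activeTree, finalTree, strOf] at hw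
    exact hw ▸ .nil q
  | head hstep hrest ih =>
    subst hw
    rcases nMove_activeTree hstep with ⟨a, s', p, rfl, hp, rfl⟩ | ⟨rfl, rfl⟩
    · exact .cons hp (ih rfl)
    · obtain ⟨_, hmove, -⟩ := hrest.cases_head.resolve_left (by simp [finalTree])
      exact absurd hmove (not_nMove_singleton q)

lemma reflTransGen_flatTree_finalTree_iff {s : List U} {qf : U} :
    Relation.ReflTransGen (NMove q0 (faRules δ)) (flatTree s) (finalTree qf) ↔
      FASteps δ q0 s qf := by
  refine ⟨fun h => ?_, fun h => .head ?_ (reflTransGen_activeTree_of_faSteps h)⟩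
  · obtain ⟨_, hmove, hrest⟩ := h.cases_head.resolve_left fun heq => by
      simpa [flatTree, finalTree, strOf] using congrArg (TSym.slash ∈ ·) heq
    exact faSteps_of_reflTransGen_activeTree (nMove_flatTree hmove ▸ hrest)
  · simpa [flatTree, activeTree, NMove] using
      GMove.init (Q0 := {q0}) (Δ := faRules δ) (γ := fun a => {a}) (l := []) (r := []) (s := s)
        (Set.mem_singleton q0)

end Runs

theorem fa_to_fsta_general {U : Type} (Sa Q Qf : Set U) (q0 : U) (δ : U → U → Set U)
    (hq0 : q0 ∈ Q)
    (hδ : ∀ q a, δ q a ⊆ Q)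
    (hdom : ∀ q a, (δ q a).Nonempty → q ∈ Q ∧ a ∈ Sa)
    (hdisj : Disjoint Q Sa) :
    NLang Sa q0 (faRules δ) Qf
      = {t | ∃ s ∈ FALang Sa δ q0 Qf, t = TSym.op :: (strOf s ++ [TSym.cl])} := by
  have hq0Sa : q0 ∉ Sa := hdisj.notMem_of_mem_left hq0
  have hrules : ∀ a b c, (a, b, c) ∈ faRules δ → a ∉ Sa ∧ b ∈ Sa ∧ c ∉ Sa := fun a b c hc =>
    have hab := hdom a b ⟨c, hc⟩
    ⟨hdisj.notMem_of_mem_left hab.1, hab.2, hdisj.notMem_of_mem_left (hδ a b hc)⟩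
  ext t
  constructor
  · rintro ⟨htree, qf, hqf, hrun⟩
    have hw : weight Sa t ≤ 1 :=
      weight_eq_of_reflTransGen hq0Sa hrules hrun ▸ weight_finalTree_le_one qf
    obtain ⟨s, hs, rfl⟩ := IsTree.exists_eq_flatTree htree hw
    exact ⟨s, ⟨hs, qf, hqf, reflTransGen_flatTree_finalTree_iff.1 hrun⟩, rfl⟩
  · rintro ⟨s, ⟨hs, qf, hqf, hrun⟩, rfl⟩
    exact ⟨isTree_flatTree hs, qf, hqf, reflTransGen_flatTree_finalTree_iff.2 hrun⟩

/-- If `L ⊆ Σ*` is the language recognised by a finite (string)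
automaton `(Σ, Q, Q_f, q₀, δ)`, then the string tree language
`⟨L⟩ = {⟨s⟩ | s ∈ L}` is recognised by the NFSTA `(Σ, Q ∪ Σ, Q_f, q₀, δ)`,
where `δ` is extended so that `δ(q₁, q₂) = ∅` for all `q₁, q₂ ∈ Q`. -/
theorem fa_to_fsta {U : Type} (Sa Q Qf : Set U) (q0 : U) (δ : U → U → Set U)
    (hSa : Sa.Finite) (hQ : Q.Finite) (hQf : Qf ⊆ Q) (hq0 : q0 ∈ Q)
    (hδ : ∀ q a, δ q a ⊆ Q)
    (hdom : ∀ q a, (δ q a).Nonempty → q ∈ Q ∧ a ∈ Sa)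
    (hdisj : Disjoint Q Sa) :
    NLang Sa q0 (faRules δ) Qf
      = {t | ∃ s ∈ FALang Sa δ q0 Qf, t = TSym.op :: (strOf s ++ [TSym.cl])} :=
  fa_to_fsta_general Sa Q Qf q0 δ hq0 hδ hdom hdisj

end StringTree
end

section
/- The NFSTA (Σ, Q ∪ Σ, Q_f, q₀, δ) obtained from a finite string automaton (Σ, Q, Q_f, q₀, δ) by extending δ with δ(q₁, q₂) = ∅ for all q₁, q₂ ∈ Q accepts no tree of T(Σ) containing more than one label: if t ∈ T(Σ) contains a label strictly inside another label, then t is not accepted. -/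
namespace StringTree

/-! Auxiliary development for statement 8. -/

section Aux

variable {U : Type}

/-- op-counter. -/
def auxOpCnt (w : List (TSym U)) : ℕ :=
  w.countP (fun x => match x with | TSym.op => true | _ => false)

/-- Slash-predecessor relation: a slash must be preceded by a `Q`-letter. -/
def auxR1 (Q : Set U) (x y : TSym U) : Prop :=
  y = TSym.slash → ∃ b ∈ Q, x = TSym.ltr b

/-- "No loose state" relation: a `Q`-letter must be followed by a slash. -/
def auxR2 (Q : Set U) (x y : TSym U) : Prop :=
  (∃ b ∈ Q, x = TSym.ltr b) → y = TSym.slash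

def auxSOK (Q : Set U) (w : List (TSym U)) : Prop :=
  w.head? ≠ some TSym.slash ∧ List.Chain' (auxR1 Q) w

def auxNL (Q : Set U) (w : List (TSym U)) : Prop :=
  List.Chain' (auxR2 Q) w ∧ ∀ b ∈ Q, w.getLast? ≠ some (TSym.ltr b)

def auxInv (Q : Set U) (w : List (TSym U)) : Prop :=
  auxSOK Q w ∧ (2 ≤ auxOpCnt w ∨ ¬ auxNL Q w)

lemma aux_chain3 {R : TSym U → TSym U → Prop} {l b m : List (TSym U)} {x y : TSym U}
    (hh : b.head? = some x) (hl : b.getLast? = some y) :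
    List.Chain' R (l ++ (b ++ m)) ↔ List.Chain' R l ∧ List.Chain' R b ∧ List.Chain' R m ∧
      (∀ z ∈ l.getLast?, R z x) ∧ (∀ z ∈ m.head?, R y z) := by
  unfold List.Chain'
  rw [List.isChain_append, List.isChain_append]
  simp only [hh, hl, Option.mem_def, Option.some.injEq, forall_eq']
  constructor
  · rintro ⟨h1, ⟨h2, h3, h4⟩, h5⟩
    refine ⟨h1, h2, h3, ?_, h4⟩
    intro z hz
    apply h5 z hz
    simp [List.head?_append, hh]
  · rintro ⟨h1, h2, h3, h4, h5⟩
    refine ⟨h1, ⟨h2, h3, h5⟩, ?_⟩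
    intro z hz w hw
    simp [List.head?_append, hh] at hw
    subst hw
    exact h4 z hz

lemma aux_opCnt_append (a b : List (TSym U)) : auxOpCnt (a ++ b) = auxOpCnt a + auxOpCnt b :=
  List.countP_append

lemma aux_opCnt_strOf (s : List U) : auxOpCnt (strOf s) = 0 := by
  apply List.countP_eq_zero.2
  intro x hx
  simp [strOf] at hx
  obtain ⟨a, -, rfl⟩ := hx
  simp

lemma aux_head_ne {s : List U} {r : List (TSym U)} :
    ∀ z ∈ (strOf s ++ TSym.cl :: r).head?, z ≠ TSym.slash := by
  cases s <;> simp [strOf]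

lemma aux_head_cons (l : List (TSym U)) (x : TSym U) (z : List (TSym U)) :
    (l ++ x :: z).head? = some (l.headD x) := by cases l <;> simp

lemma aux_last_append {m : List (TSym U)} (x : List (TSym U)) {q : TSym U}
    (h : m.getLast? = some q) : (x ++ m).getLast? = some q := by
  rw [List.getLast?_append, h]; rfl

lemma aux_last_eq (l b m : List (TSym U)) {q : TSym U} (h : m.getLast? = some q) :
    (l ++ (b ++ m)).getLast? = some q := by
  rw [← List.append_assoc]; exact aux_last_append _ h

lemma aux_exists_last (s : List U) (r : List (TSym U)) :
    ∃ q, (strOf s ++ TSym.cl :: r).getLast? = some q := by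
  rw [List.getLast?_append]
  rcases h : (TSym.cl :: r).getLast? with _ | q
  · simp at h
  · exact ⟨q, rfl⟩

/-- One-step preservation of the invariant. -/
lemma aux_step (Q Sa : Set U) (q0 : U) (δ : U → U → Set U)
    (hq0 : q0 ∈ Q) (hδ : ∀ q a, δ q a ⊆ Q)
    (hdom : ∀ q a, (δ q a).Nonempty → q ∈ Q ∧ a ∈ Sa)
    (hdisj : Disjoint Q Sa)
    {w w' : List (TSym U)} (hw : auxInv Q w) (hm : NMove q0 (faRules δ) w w') :
    auxInv Q w' := by
  obtain ⟨⟨hhd, hch⟩, hor⟩ := hw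
  cases hm with
  | @init l r s a ha =>
    have haQ : a ∈ Q := by rwa [Set.mem_singleton_iff.1 ha]
    simp only [List.append_assoc, List.cons_append, List.nil_append] at hhd hch hor ⊢
    set m : List (TSym U) := strOf s ++ TSym.cl :: r with hmdef
    obtain ⟨hcl, -, hcm, hbd1, hbd2⟩ :=
      (aux_chain3 (l := l) (b := [TSym.op]) (m := m) rfl rfl).1 hch
    refine ⟨⟨?_, ?_⟩, ?_⟩
    · rw [aux_head_cons] at hhd ⊢; exact hhd
    · refine (aux_chain3 (b := [TSym.op, TSym.ltr a, TSym.slash]) rfl rfl).2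
        ⟨hcl, ?_, hcm, ?_, ?_⟩
      · refine List.isChain_cons_cons.2 ⟨?_, List.isChain_cons_cons.2 ⟨?_, ?_⟩⟩
        · intro h; cases h
        · intro _; exact ⟨a, haQ, rfl⟩
        · simp
      · intro z _ h; cases h
      · intro z hz h; exact absurd h (aux_head_ne z hz)
    · have hcnt : auxOpCnt (l ++ TSym.op :: TSym.ltr a :: TSym.slash :: m) =
          auxOpCnt (l ++ TSym.op :: m) := by
        simp [auxOpCnt, List.countP_append, List.countP_cons]
      rw [hcnt]
      rcases hor with h2 | hNL
      · exact Or.inl h2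
      · refine Or.inr ?_
        rintro ⟨hc', hlast'⟩
        apply hNL
        obtain ⟨hcl', -, hcm', hbd1', hbd2'⟩ :=
          (aux_chain3 (l := l) (b := [TSym.op, TSym.ltr a, TSym.slash]) (m := m) rfl rfl).1 hc'
        obtain ⟨q, hq⟩ := aux_exists_last s r
        have e1 : (l ++ TSym.op :: m).getLast? = some q := aux_last_eq l [TSym.op] m hq
        have e2 : (l ++ TSym.op :: TSym.ltr a :: TSym.slash :: m).getLast? = some q :=
          aux_last_eq l [TSym.op, TSym.ltr a, TSym.slash] m hq
        constructor
        · refine (aux_chain3 (b := [TSym.op]) rfl rfl).2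
            ⟨hcl', List.isChain_singleton _, hcm', hbd1', ?_⟩
          rintro z _ ⟨q', -, h2⟩; cases h2
        · intro b hb
          rw [e1]
          have := hlast' b hb
          rw [e2] at this
          exact this
  | @horiz l r s a b c habc =>
    have hcQ : c ∈ Q := hδ a b habc
    have hbSa : b ∈ Sa := (hdom a b ⟨c, habc⟩).2
    have hbQ : b ∉ Q := fun h => hdisj.le_bot ⟨h, hbSa⟩ |>.elim
    simp only [List.append_assoc, List.cons_append, List.nil_append] at hhd hch hor ⊢
    set m : List (TSym U) := strOf s ++ TSym.cl :: r with hmdef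
    obtain ⟨hcl, -, hcm, hbd1, hbd2⟩ := (aux_chain3 (l := l)
      (b := [TSym.op, TSym.ltr a, TSym.slash, TSym.ltr b]) (m := m) rfl rfl).1 hch
    refine ⟨⟨?_, ?_⟩, ?_⟩
    · rw [aux_head_cons] at hhd ⊢; exact hhd
    · refine (aux_chain3 (b := [TSym.op, TSym.ltr c, TSym.slash]) rfl rfl).2
        ⟨hcl, ?_, hcm, ?_, ?_⟩
      · refine List.isChain_cons_cons.2 ⟨?_, List.isChain_cons_cons.2 ⟨?_, ?_⟩⟩
        · intro h; cases h
        · intro _; exact ⟨c, hcQ, rfl⟩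
        · simp
      · intro z _ h; cases h
      · intro z hz h; exact absurd h (aux_head_ne z hz)
    · have hcnt : auxOpCnt (l ++ TSym.op :: TSym.ltr c :: TSym.slash :: m) =
          auxOpCnt (l ++ TSym.op :: TSym.ltr a :: TSym.slash :: TSym.ltr b :: m) := by
        simp [auxOpCnt, List.countP_append, List.countP_cons]
      rw [hcnt]
      rcases hor with h2 | hNL
      · exact Or.inl h2
      · refine Or.inr ?_
        rintro ⟨hc', hlast'⟩
        apply hNL
        obtain ⟨hcl', -, hcm', hbd1', hbd2'⟩ :=
          (aux_chain3 (l := l) (b := [TSym.op, TSym.ltr c, TSym.slash]) (m := m) rfl rfl).1 hc'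
        obtain ⟨q, hq⟩ := aux_exists_last s r
        have e1 : (l ++ TSym.op :: TSym.ltr a :: TSym.slash :: TSym.ltr b :: m).getLast? = some q :=
          aux_last_eq l [TSym.op, TSym.ltr a, TSym.slash, TSym.ltr b] m hq
        have e2 : (l ++ TSym.op :: TSym.ltr c :: TSym.slash :: m).getLast? = some q :=
          aux_last_eq l [TSym.op, TSym.ltr c, TSym.slash] m hq
        constructor
        · refine (aux_chain3 (b := [TSym.op, TSym.ltr a, TSym.slash, TSym.ltr b]) rfl rfl).2
            ⟨hcl', ?_, hcm', hbd1', ?_⟩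
          · refine List.isChain_cons_cons.2 ⟨?_, List.isChain_cons_cons.2 ⟨?_, List.isChain_cons_cons.2 ⟨?_, ?_⟩⟩⟩
            · rintro ⟨q', -, h2⟩; cases h2
            · intro _; rfl
            · rintro ⟨q', -, h2⟩; cases h2
            · simp
          · rintro z _ ⟨q', hqQ, h2⟩
            cases h2; exact absurd hqQ hbQ
        · intro b' hb'
          rw [e1]
          have := hlast' b' hb'
          rw [e2] at this
          exact this
  | @vert l r a b hb =>
    have hb' : b = a := hb
    subst hb'
    simp only [List.append_assoc, List.cons_append, List.nil_append] at hhd hch hor ⊢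
    obtain ⟨hcl, hcb, hcr, hbd1, hbd2⟩ := (aux_chain3 (l := l)
      (b := [TSym.op, TSym.ltr b, TSym.slash, TSym.cl]) (m := r) rfl rfl).1 hch
    have hbQ : b ∈ Q := by
      have h1 := (List.isChain_cons_cons.1 ((List.isChain_cons_cons.1 hcb).2)).1 rfl
      obtain ⟨q, hqQ, h2⟩ := h1
      cases h2; exact hqQ
    refine ⟨⟨?_, ?_⟩, ?_⟩
    · rw [aux_head_cons] at hhd ⊢
      cases l with
      | nil => simp
      | cons x l' => simpa using hhd
    · refine (aux_chain3 (b := [TSym.ltr b]) rfl rfl).2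
        ⟨hcl, List.isChain_singleton _, hcr, ?_, ?_⟩
      · intro z _ h; cases h
      · intro z _ _; exact ⟨b, hbQ, rfl⟩
    · refine Or.inr ?_
      rintro ⟨hc', hlast'⟩
      rcases hr : r with _ | ⟨z, r'⟩
      · subst hr
        exact hlast' b hbQ (List.getLast?_concat (l := l))
      · subst hr
        obtain ⟨-, -, -, -, hbd2'⟩ :=
          (aux_chain3 (l := l) (b := [TSym.ltr b]) (m := z :: r') rfl rfl).1 hc'
        have hz : z = TSym.slash := hbd2' z rfl ⟨b, hbQ, rfl⟩
        obtain ⟨q, -, h2⟩ := hbd2 z rfl hz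
        cases h2

lemma aux_tree_noslash {Sa : Set U} {t : List (TSym U)} (h : IsTree (ltrs Sa) t) :
    ∀ x ∈ t, x ≠ TSym.slash := by
  induction h with
  | nil => simp
  | @single x hx =>
    obtain ⟨a, -, rfl⟩ := hx
    simp
  | @concat x y _ _ ih1 ih2 =>
    intro z hz
    simp only [List.mem_cons, List.mem_append] at hz ih1 ih2
    rcases hz with rfl | ⟨⟨hz | hz⟩ | hz⟩
    · simp
    · exact ih1 z (Or.inr (Or.inl hz))
    · exact ih2 z (Or.inr (Or.inl hz))
    · exact ih1 z (Or.inr (Or.inr hz))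
  | @encap t _ ih =>
    intro z hz
    simp only [List.mem_cons, List.mem_append] at hz
    rcases hz with rfl | hz | rfl | hz
    · simp
    · exact ih z hz
    · simp
    · cases hz

lemma aux_chain_noslash (Q : Set U) {w : List (TSym U)}
    (h : ∀ x ∈ w, x ≠ TSym.slash) : List.Chain' (auxR1 Q) w := by
  induction w with
  | nil => exact List.isChain_nil
  | cons x xs ih =>
    unfold List.Chain'
    rw [List.isChain_cons]
    refine ⟨?_, ih fun y hy => h y (List.mem_cons_of_mem _ hy)⟩
    intro y hy hsl
    exact absurd hsl (h y (List.mem_cons_of_mem _ (List.mem_of_mem_head? hy)))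

lemma aux_tree_head {S : Set (TSym U)} {t : List (TSym U)} (h : IsTree S t) :
    ∃ z, t = TSym.op :: z := by cases h <;> exact ⟨_, rfl⟩

lemma aux_tree_opcnt {S : Set (TSym U)} {t : List (TSym U)} (h : IsTree S t) :
    1 ≤ auxOpCnt t := by
  obtain ⟨z, rfl⟩ := aux_tree_head h
  simp [auxOpCnt, List.countP_cons]

lemma aux_final (Q : Set U) {qf : U} (h : qf ∈ Q) : ¬ auxInv Q (finalTree qf) := by
  rintro ⟨-, h2 | h2⟩
  · simp [finalTree, auxOpCnt, List.countP_cons] at h2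
  · apply h2
    constructor
    · refine List.isChain_cons_cons.2 ⟨?_, List.isChain_cons_cons.2 ⟨?_, List.isChain_cons_cons.2 ⟨?_, ?_⟩⟩⟩
      · rintro ⟨q, -, hh⟩; cases hh
      · intro _; rfl
      · rintro ⟨q, -, hh⟩; cases hh
      · simp
    · intro b _ hh
      simp [finalTree] at hh

end Aux

/-- The NFSTA `(Σ, Q ∪ Σ, Q_f, q₀, δ)` obtained from a finite
string automaton `(Σ, Q, Q_f, q₀, δ)` by extending `δ` with
`δ(q₁, q₂) = ∅` for `q₁, q₂ ∈ Q` accepts no tree of `T(Σ)` containing more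
than one label: if `t ∈ T(Σ)` contains a label strictly inside another label
(i.e. its root label contains a whole subtree `u ∈ T(Σ)`), then `t` is not
accepted. -/
theorem fa_fsta_rejects_nested {U : Type} (Sa Q Qf : Set U) (q0 : U)
    (δ : U → U → Set U)
    (hSa : Sa.Finite) (hQ : Q.Finite) (hQf : Qf ⊆ Q) (hq0 : q0 ∈ Q)
    (hδ : ∀ q a, δ q a ⊆ Q)
    (hdom : ∀ q a, (δ q a).Nonempty → q ∈ Q ∧ a ∈ Sa)
    (hdisj : Disjoint Q Sa) :
    ∀ t x u y : List (TSym U), t ∈ TreeSet Sa → u ∈ TreeSet Sa →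
      t = TSym.op :: (x ++ u ++ y ++ [TSym.cl]) →
      ¬ NAccepts q0 (faRules δ) Qf t := by
  intro t x u y ht hu hteq hacc
  have hacc' : ∃ qf ∈ Qf, Relation.ReflTransGen (NMove q0 (faRules δ)) t (finalTree qf) := hacc
  obtain ⟨qf, hqf, hsteps⟩ := hacc'
  have hns : ∀ z ∈ t, z ≠ TSym.slash := aux_tree_noslash ht
  have hocu : 1 ≤ auxOpCnt u := aux_tree_opcnt hu
  have hinv : auxInv Q t := by
    refine ⟨⟨?_, aux_chain_noslash Q hns⟩, Or.inl ?_⟩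
    · obtain ⟨z, rfl⟩ := aux_tree_head ht
      simp
    · subst hteq
      have hsplit : auxOpCnt (TSym.op :: (x ++ u ++ y ++ [TSym.cl])) =
          1 + (auxOpCnt x + auxOpCnt u + auxOpCnt y) := by
        simp [auxOpCnt, List.countP_append, List.countP_cons]
        ring
      omega
  have htrans : ∀ w v : List (TSym U), Relation.ReflTransGen (NMove q0 (faRules δ)) w v →
      auxInv Q w → auxInv Q v := by
    intro w v hwv
    induction hwv with
    | refl => exact id
    | tail h1 h2 ih => exact fun hw => aux_step Q Sa q0 δ hq0 hδ hdom hdisj (ih hw) h2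
  exact aux_final Q (hQf hqf) (htrans _ _ hsteps hinv)


end StringTree
end

section
/- Let Â = (Q̂, F, Q̂_f, Δ̂) be a non-deterministic classical bottom-up finite tree automaton over a ranked alphabet F recognising the term language L̂ ⊆ T̂(F), and let Σ be the (unranked) set of symbols of F. Then there exists an NFSTA A = (Σ, Q, Q_f, q₀, Δ) over Σ recognising L = τ(L̂), the image of L̂ under the injective term-to-string-tree map τ. -/
namespace StringTree

section Aux

variable {U : Type}

/-! ### Items and forests -/

inductive Itm (U : Type) : Type where
  | ltr : U → Itm U
  | node : Option U → List (Itm U) → Itm U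

def hdStr : Option U → List (TSym U)
  | none => []
  | some a => [TSym.ltr a, TSym.slash]

def flI : Itm U → List (TSym U)
  | Itm.ltr a => [TSym.ltr a]
  | Itm.node oa G => TSym.op :: (hdStr oa ++ (((G.attach.map fun x => flI x.1).flatten) ++ [TSym.cl]))
  decreasing_by
    simp only [Itm.node.sizeOf_spec]
    have h := List.sizeOf_lt_of_mem x.2
    omega

def flF (G : List (Itm U)) : List (TSym U) := (G.map flI).flatten

@[simp] theorem flF_nil : flF ([] : List (Itm U)) = [] := rfl

@[simp] theorem flF_cons (i : Itm U) (G : List (Itm U)) : flF (i :: G) = flI i ++ flF G := by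
  simp [flF]

@[simp] theorem flF_append (G G' : List (Itm U)) : flF (G ++ G') = flF G ++ flF G' := by
  simp [flF]

theorem flI_node (oa : Option U) (G : List (Itm U)) :
    flI (Itm.node oa G) = TSym.op :: (hdStr oa ++ (flF G ++ [TSym.cl])) := by
  rw [flI]; congr 1; simp [flF, List.attach_map_val]

theorem flI_ne_nil (i : Itm U) : flI i ≠ [] := by
  cases i with
  | ltr a => simp [flI]
  | node oa G => rw [flI_node]; simp

theorem flF_eq_nil {G : List (Itm U)} (h : flF G = []) : G = [] := by
  cases G with
  | nil => rfl
  | cons i G => exfalso; rw [flF_cons] at h; exact flI_ne_nil i (List.append_eq_nil_iff.mp h).1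

theorem hdStr_no_op {oa : Option U} : TSym.op ∉ hdStr oa := by
  cases oa <;> simp [hdStr]

theorem hdStr_no_cl {oa : Option U} : TSym.cl ∉ hdStr oa := by
  cases oa <;> simp [hdStr]

theorem strOf_no_op {s : List U} : TSym.op ∉ strOf s := by simp [strOf]

theorem strOf_no_cl {s : List U} : TSym.cl ∉ strOf s := by simp [strOf]

theorem strOf_no_slash {s : List U} : TSym.slash ∉ strOf s := by simp [strOf]

theorem flF_letters : ∀ (G : List (Itm U)) (s : List U),
    flF G = strOf s → G = s.map Itm.ltr := by
  intro G
  induction G with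
  | nil => intro s h; cases s with
    | nil => rfl
    | cons a s => simp [strOf] at h
  | cons i G ih =>
    intro s h
    cases i with
    | ltr a =>
      cases s with
      | nil => simp [strOf, flI] at h
      | cons b s =>
        simp only [flF_cons, flI, strOf, List.map_cons, List.cons_append, List.nil_append] at h ⊢
        obtain ⟨h1, h2⟩ := List.cons.injEq .. ▸ h
        cases h1
        rw [ih s h2]
    | node oa G' =>
      exfalso
      rw [flF_cons, flI_node] at h
      have : TSym.op ∈ strOf s := by rw [← h]; simp
      exact strOf_no_op this

@[simp] theorem flF_map_ltr (s : List U) : flF (s.map Itm.ltr) = strOf s := by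
  induction s with
  | nil => rfl
  | cons a s ih => simp [flI, strOf] at *; exact ih

/-! ### String surgery lemmas -/

theorem first_occ {α : Type} {c : α} : ∀ {x₁ y₁ x₂ y₂ : List α},
    x₁ ++ c :: y₁ = x₂ ++ c :: y₂ → c ∉ x₁ → c ∉ x₂ → x₁ = x₂ ∧ y₁ = y₂ := by
  intro x₁
  induction x₁ with
  | nil =>
    intro y₁ x₂ y₂ h h1 h2
    cases x₂ with
    | nil => simpa using h
    | cons b x₂ =>
      exfalso; simp at h
      exact h2 (by rw [h.1]; exact List.mem_cons_self)
  | cons a x₁ ih =>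
    intro y₁ x₂ y₂ h h1 h2
    cases x₂ with
    | nil =>
      exfalso; simp at h
      exact h1 (by rw [← h.1]; exact List.mem_cons_self)
    | cons b x₂ =>
      simp only [List.cons_append, List.cons.injEq] at h
      obtain ⟨rfl, h⟩ := h
      obtain ⟨h3, h4⟩ := ih h (fun hc => h1 (List.mem_cons_of_mem _ hc))
        (fun hc => h2 (List.mem_cons_of_mem _ hc))
      exact ⟨by rw [h3], h4⟩

theorem mem_split_first {α : Type} {c : α} : ∀ {w : List α}, c ∈ w →
    ∃ x y, w = x ++ c :: y ∧ c ∉ x := by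
  intro w
  induction w with
  | nil => intro h; simp at h
  | cons a w ih =>
    intro h
    by_cases hc : c = a
    · exact ⟨[], w, by simp [hc], by simp⟩
    · have : c ∈ w := by rcases List.mem_cons.mp h with h | h; exact absurd h hc; exact h
      obtain ⟨x, y, rfl, hx⟩ := ih this
      exact ⟨a :: x, y, rfl, by simp [hx, hc]⟩

/-- Every `cl` in the flattening of a forest has an `op` before it. -/
theorem no_cl : ∀ (G : List (Itm U)) (x y : List (TSym U)),
    flF G = x ++ TSym.cl :: y → (∀ c ∈ x, c ≠ TSym.op) → False := by
  intro G
  induction G with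
  | nil => intro x y h _; exact absurd h.symm (by simp)
  | cons i G ih =>
    intro x y h hx
    cases i with
    | ltr a =>
      rw [flF_cons] at h
      cases x with
      | nil => simp [flI] at h
      | cons b x =>
        simp only [flI, List.cons_append, List.singleton_append, List.cons.injEq] at h
        exact ih x y h.2 (fun c hc => hx c (List.mem_cons_of_mem _ hc))
    | node oa G' =>
      rw [flF_cons, flI_node] at h
      cases x with
      | nil => simp at h
      | cons b x =>
        have hb : b = TSym.op := by
          have := congrArg (fun l => l.head?) h
          simpa using this.symm
        exact hx b (List.mem_cons_self) hb

/-- No `op` in the flattening of a forest is followed by a `cl`-free tail. -/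
theorem no_op_end : ∀ (G : List (Itm U)) (x z : List (TSym U)),
    flF G = x ++ TSym.op :: z → TSym.cl ∉ z → False := by
  intro G
  induction G with
  | nil => intro x z h _; exact absurd h.symm (by simp)
  | cons i G ih =>
    intro x z h hz
    cases i with
    | ltr a =>
      rw [flF_cons] at h
      cases x with
      | nil => simp [flI] at h
      | cons b x =>
        simp only [flI, List.cons_append, List.singleton_append, List.cons.injEq] at h
        exact ih x z h.2 hz
    | node oa G' =>
      rw [flF_cons, flI_node, List.cons_append] at h
      cases x with
      | nil =>
        simp only [List.nil_append, List.cons.injEq] at h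
        apply hz; rw [← h.2]; simp
      | cons b x =>
        simp only [List.cons_append, List.cons.injEq] at h
        obtain ⟨-, h⟩ := h
        -- h : (hdStr oa ++ (flF G' ++ [cl])) ++ flF G = x ++ op :: z
        rcases List.append_eq_append_iff.mp h with ⟨a', hx, hG⟩ | ⟨c', hP, hoz⟩
        · exact ih a' z hG hz
        · -- hP : hdStr oa ++ (flF G' ++ [cl]) = x ++ c', hoz : op :: z = c' ++ flF G
          cases c' with
          | nil =>
            exact ih [] z (by simpa using hoz.symm) hz
          | cons y c'' =>
            obtain ⟨hy, hz'⟩ := List.cons.injEq .. ▸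
              (show TSym.op :: z = y :: (c'' ++ flF G) by simpa using hoz)
            subst hy
            have hP' : x ++ (TSym.op :: c'') = (hdStr oa ++ flF G') ++ [TSym.cl] := by
              rw [← hP]; simp
            rcases c''.eq_nil_or_concat with rfl | ⟨L, b, rfl⟩
            · have h2 := List.append_inj' hP' (by simp)
              simp at h2
            · have h2 := List.append_inj' (show (x ++ TSym.op :: L) ++ [b] =
                (hdStr oa ++ flF G') ++ [TSym.cl] by simpa using hP') (by simp)
              have hb : b = TSym.cl := by simpa using h2.2
              apply hz
              rw [hz', hb]
              simp



/-! ### Big-step semantics on forests -/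

def dOf (Δ : Set (U × U × U)) : U → U → Set U := fun a b => {c | (a, b, c) ∈ Δ}

inductive EvF (q0 : U) (Δ : Set (U × U × U)) : List (Itm U) → List U → Prop where
  | nil : EvF q0 Δ [] []
  | ltr {a G s} : EvF q0 Δ G s → EvF q0 Δ (Itm.ltr a :: G) (a :: s)
  | node {oa G' s' q G s} : EvF q0 Δ G' s' → FASteps (dOf Δ) (oa.getD q0) s' q →
      EvF q0 Δ G s → EvF q0 Δ (Itm.node oa G' :: G) (q :: s)

variable {q0 : U} {Δ : Set (U × U × U)}

theorem EvF_cons_iff {i : Itm U} {G : List (Itm U)} {S : List U} :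
    EvF q0 Δ (i :: G) S ↔ ∃ q s, S = q :: s ∧ EvF q0 Δ [i] [q] ∧ EvF q0 Δ G s := by
  constructor
  · intro h
    cases h with
    | ltr h' => exact ⟨_, _, rfl, EvF.ltr EvF.nil, h'⟩
    | node h1 h2 h3 => exact ⟨_, _, rfl, EvF.node h1 h2 EvF.nil, h3⟩
  · rintro ⟨q, s, rfl, h1, h2⟩
    cases h1 with
    | ltr h' => exact EvF.ltr h2
    | node ha hb hc => exact EvF.node ha hb h2

theorem EvF_ltr_val {a q : U} (h : EvF q0 Δ [Itm.ltr a] [q]) : q = a := by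
  cases h; rfl

theorem EvF_node_inv {oa : Option U} {G : List (Itm U)} {q : U}
    (h : EvF q0 Δ [Itm.node oa G] [q]) :
    ∃ s', EvF q0 Δ G s' ∧ FASteps (dOf Δ) (oa.getD q0) s' q := by
  cases h with
  | node h1 h2 h3 => exact ⟨_, h1, h2⟩

theorem EvF_node_intro {oa : Option U} {G : List (Itm U)} {q : U} {s' : List U}
    (h1 : EvF q0 Δ G s') (h2 : FASteps (dOf Δ) (oa.getD q0) s' q) :
    EvF q0 Δ [Itm.node oa G] [q] :=
  EvF.node h1 h2 EvF.nil

/-! ### Shape of items -/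

theorem flI_shape {i : Itm U} {m : List (TSym U)}
    (h : flI i = TSym.op :: (m ++ [TSym.cl])) :
    ∃ oa G, i = Itm.node oa G ∧ hdStr oa ++ flF G = m := by
  cases i with
  | ltr a => simp [flI] at h
  | node oa G =>
    refine ⟨oa, G, rfl, ?_⟩
    rw [flI_node] at h
    have h' : (hdStr oa ++ flF G) ++ [TSym.cl] = m ++ [TSym.cl] := by
      simpa using h
    simpa using (List.append_inj' h' (by simp)).1

/-! ### The alignment lemma -/

theorem align : ∀ (n : ℕ) (G : List (Itm U)) (l m r : List (TSym U)),
    (flF G).length = n →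
    flF G = l ++ (TSym.op :: (m ++ [TSym.cl])) ++ r →
    (∀ c ∈ m, c ≠ TSym.op ∧ c ≠ TSym.cl) →
    ∃ (i : Itm U) (Rep : Itm U → List (Itm U)),
      G = Rep i ∧ flI i = TSym.op :: (m ++ [TSym.cl]) ∧
      (∀ i', flF (Rep i') = l ++ flI i' ++ r) ∧
      (∀ i₁ i₂ S, (∀ q, EvF q0 Δ [i₁] [q] → EvF q0 Δ [i₂] [q]) →
        EvF q0 Δ (Rep i₁) S → EvF q0 Δ (Rep i₂) S) := by
  intro n
  induction n using Nat.strong_induction_on with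
  | _ n ih =>
  intro G l m r hn h hm
  set A := TSym.op :: (m ++ [TSym.cl]) with hA
  rw [List.append_assoc] at h
  cases G with
  | nil => exact absurd h.symm (by simp [hA])
  | cons j G₂ =>
  -- helper for the tail-recursion cases
  have tailcase : ∀ l', flF G₂ = l' ++ A ++ r → l = flI j ++ l' →
      ∃ (i : Itm U) (Rep : Itm U → List (Itm U)),
      j :: G₂ = Rep i ∧ flI i = A ∧
      (∀ i', flF (Rep i') = l ++ flI i' ++ r) ∧
      (∀ i₁ i₂ S, (∀ q, EvF q0 Δ [i₁] [q] → EvF q0 Δ [i₂] [q]) →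
        EvF q0 Δ (Rep i₁) S → EvF q0 Δ (Rep i₂) S) := by
    intro l' h2 hl
    have hlen : (flF G₂).length < n := by
      rw [← hn]; simp
      have := flI_ne_nil j
      cases hj : flI j with
      | nil => exact absurd hj this
      | cons c cs => simp [hj]
    obtain ⟨i, Rep, hG, hfl, hrep, hcong⟩ := ih _ hlen G₂ l' m r rfl h2 hm
    refine ⟨i, fun i' => j :: Rep i', by simp [← hG], hfl, ?_, ?_⟩
    · intro i'; rw [flF_cons, hrep i', hl]; simp
    · intro i₁ i₂ S htr hev
      rw [EvF_cons_iff] at hev ⊢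
      obtain ⟨q, s, rfl, h1, h2'⟩ := hev
      exact ⟨q, s, rfl, h1, hcong i₁ i₂ s htr h2'⟩
  cases j with
  | ltr a =>
    cases l with
    | nil => rw [flF_cons] at h; simp [flI, hA] at h
    | cons b l' =>
      rw [flF_cons] at h
      simp only [flI, List.singleton_append, List.cons_append, List.cons.injEq] at h
      obtain ⟨rfl, h⟩ := h
      exact tailcase l' (by simpa using h) (by simp [flI])
  | node oa G₁ =>
    rw [flF_cons] at h
    rcases List.append_eq_append_iff.mp h with ⟨a', hl, hd⟩ | ⟨c', hj, hAr⟩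
    · exact tailcase a' (by simpa using hd) hl
    · -- hj : flI j = l ++ c', hAr : A ++ r = c' ++ flF G₂   (j = node oa G₁)
      cases c' with
      | nil =>
        simp only [List.append_nil] at hj
        exact tailcase [] (by simpa using hAr.symm) (by rw [hj]; simp)
      | cons c0 c'' =>
      have hAr' : TSym.op :: ((m ++ [TSym.cl]) ++ r) = c0 :: (c'' ++ flF G₂) := by
        simpa [hA] using hAr
      obtain ⟨hc0, hAr2⟩ := List.cons.injEq .. ▸ hAr'
      subst hc0
      -- the redex starts strictly inside flI j (or at its start)
      cases l with
      | nil =>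
        -- head case: A aligns with flI j itself
        simp only [List.nil_append] at hj
        have heq : A ++ r = flI (Itm.node oa G₁) ++ flF G₂ := by
          rw [hj]; exact hAr
        rw [flI_node, hA] at heq
        have heq2 : m ++ TSym.cl :: r = (hdStr oa ++ flF G₁) ++ TSym.cl :: flF G₂ := by
          have := (List.cons.injEq .. ▸ heq).2
          simpa using this
        by_cases hcl : TSym.cl ∈ flF G₁
        · exfalso
          obtain ⟨x, y, hxy, hx⟩ := mem_split_first hcl
          rw [hxy] at heq2
          have heq3 : m ++ TSym.cl :: r =
              (hdStr oa ++ x) ++ TSym.cl :: (y ++ TSym.cl :: flF G₂) := by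
            rw [heq2]; simp
          obtain ⟨hmx, -⟩ := first_occ heq3 (fun hc => ((hm _ hc).2 rfl).elim)
            (by intro hc; rcases List.mem_append.mp hc with hc | hc
                exact hdStr_no_cl hc
                exact hx hc)
          exact no_cl G₁ x y hxy (fun c hc => (hm c (by rw [hmx]; simp [hc])).1)
        · have hcl2 : TSym.cl ∉ hdStr oa ++ flF G₁ := by
            intro hc; rcases List.mem_append.mp hc with hc | hc
            exact hdStr_no_cl hc; exact hcl hc
          obtain ⟨hm2, hr2⟩ := first_occ heq2 (fun hc => ((hm _ hc).2 rfl).elim) hcl2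
          have hflj : flI (Itm.node oa G₁) = A := by
            rw [flI_node, hA, hm2]; simp
          refine ⟨Itm.node oa G₁, fun i' => i' :: G₂, rfl, hflj, ?_, ?_⟩
          · intro i'; rw [flF_cons, hr2]; simp
          · intro i₁ i₂ S htr hev
            rw [EvF_cons_iff] at hev ⊢
            obtain ⟨q, s, rfl, h1, h2'⟩ := hev
            exact ⟨q, s, rfl, htr q h1, h2'⟩
      | cons b l₂ =>
        -- l = b :: l₂ with b = op;  flI j = (b :: l₂) ++ (op :: c'')
        rw [flI_node] at hj
        have hj' : TSym.op :: (hdStr oa ++ (flF G₁ ++ [TSym.cl]))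
            = b :: (l₂ ++ TSym.op :: c'') := by simpa using hj
        obtain ⟨hb, hj2⟩ := List.cons.injEq .. ▸ hj'
        subst hb
        -- hj2 : hdStr oa ++ (flF G₁ ++ [cl]) = l₂ ++ op :: c''
        have main : ∀ l₄, flF G₁ ++ [TSym.cl] = l₄ ++ TSym.op :: c'' →
            l₂ = hdStr oa ++ l₄ →
            ∃ (i : Itm U) (Rep : Itm U → List (Itm U)),
            Itm.node oa G₁ :: G₂ = Rep i ∧ flI i = A ∧
            (∀ i', flF (Rep i') = (TSym.op :: l₂) ++ flI i' ++ r) ∧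
            (∀ i₁ i₂ S, (∀ q, EvF q0 Δ [i₁] [q] → EvF q0 Δ [i₂] [q]) →
              EvF q0 Δ (Rep i₁) S → EvF q0 Δ (Rep i₂) S) := by
          intro l₄ h4 hl₂
          have noe : ∀ (hend : flF G₁ ++ [TSym.cl] = l₄ ++ A), False := by
            intro hend
            rw [hA] at hend
            have h5 : flF G₁ ++ [TSym.cl] = (l₄ ++ TSym.op :: m) ++ [TSym.cl] := by
              rw [hend]; simp
            have h6 := (List.append_inj' h5 (by simp)).1
            exact no_op_end G₁ l₄ m h6 (fun hc => (hm _ hc).2 rfl)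
          rcases List.append_eq_append_iff.mp hAr with ⟨a', hca, hr⟩ | ⟨c₃, hA2, hG₂⟩
          · -- hca : op :: c'' = A ++ a', hr : r = a' ++ flF G₂ : A inside flF G₁
            rcases a'.eq_nil_or_concat with rfl | ⟨L, bb, rfl⟩
            · exact (noe (by rw [h4, hca]; simp)).elim
            · have h5 : flF G₁ ++ [TSym.cl] = (l₄ ++ A ++ L) ++ [bb] := by
                rw [h4, hca]; simp
              have h6 := List.append_inj' h5 (by simp)
              have hG₁ : flF G₁ = l₄ ++ A ++ L := h6.1
              have hbb : [TSym.cl] = [bb] := h6.2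
              have hlen : (flF G₁).length < n := by
                have hjl : (flI (Itm.node oa G₁)).length
                    = (hdStr oa).length + (flF G₁).length + 2 := by
                  rw [flI_node]; simp; omega
                rw [← hn, flF_cons, List.length_append, hjl]
                omega
              obtain ⟨i, Rep, hG, hfl, hrep, hcong⟩ := ih _ hlen G₁ l₄ m L rfl (by rw [hG₁, hA]) hm
              refine ⟨i, fun i' => Itm.node oa (Rep i') :: G₂, by simp [← hG], hfl, ?_, ?_⟩
              · intro i'
                rw [flF_cons, flI_node, hrep i', hl₂, hr]
                obtain ⟨hbb2⟩ := List.cons.injEq .. ▸ hbb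
                rw [← hbb2]
                simp
              · intro i₁ i₂ S htr hev
                rw [EvF_cons_iff] at hev ⊢
                obtain ⟨q, s, rfl, h1, h2'⟩ := hev
                obtain ⟨s', hs1, hs2⟩ := EvF_node_inv h1
                exact ⟨q, s, rfl, EvF_node_intro (hcong i₁ i₂ s' htr hs1) hs2, h2'⟩
          · -- hA2 : A = (op :: c'') ++ c₃, hG₂ : flF G₂ = c₃ ++ r : spill case
            exfalso
            cases c₃ with
            | nil =>
              exact noe (by rw [h4, hA2]; simp)
            | cons d0 c₄ =>
              -- op :: c'' is a proper prefix of A; its last element lies in m or is op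
              have hc2 : c'' ++ d0 :: c₄ = m ++ [TSym.cl] := by
                rw [hA] at hA2
                have h' : TSym.op :: (m ++ [TSym.cl]) = TSym.op :: (c'' ++ d0 :: c₄) := by
                  simpa using hA2
                exact ((List.cons.injEq .. ▸ h').2).symm
              rcases (d0 :: c₄).eq_nil_or_concat with habs | ⟨L, bb, hLb⟩
              · simp at habs
              · rw [hLb] at hc2
                have h7 : (c'' ++ L) ++ [bb] = m ++ [TSym.cl] := by
                  rw [← hc2]; simp
                have h8 := List.append_inj' h7 (by simp)
                have hc''m : ∀ c ∈ c'', c ∈ m := fun c hc => by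
                  rw [← h8.1]; exact List.mem_append_left _ hc
                rcases c''.eq_nil_or_concat with rfl | ⟨L₂, b₂, rfl⟩
                · have h9 : flF G₁ ++ [TSym.cl] = l₄ ++ [TSym.op] := h4
                  have := (List.append_inj' h9 (by simp)).2
                  simp at this
                · have h9 : flF G₁ ++ [TSym.cl] = (l₄ ++ TSym.op :: L₂) ++ [b₂] := by
                    rw [h4]; simp
                  have h10 := (List.append_inj' h9 (by simp)).2
                  have hb₂ : b₂ = TSym.cl := by simpa using h10.symm
                  have : b₂ ∈ m := hc''m b₂ (by simp)
                  exact (hm b₂ this).2 hb₂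
        -- now split on oa to find l₄
        cases oa with
        | none =>
          have := main l₂ (by simpa [hdStr] using hj2) (by simp [hdStr])
          simpa [hA] using this
        | some a =>
          simp only [hdStr, List.cons_append, List.nil_append] at hj2
          cases l₂ with
          | nil => simp at hj2
          | cons x l₃ =>
            obtain ⟨hx, hj3⟩ := List.cons.injEq .. ▸ (by simpa using hj2 :
              TSym.ltr a :: (TSym.slash :: (flF G₁ ++ [TSym.cl]))
                = x :: (l₃ ++ TSym.op :: c''))
            subst hx
            cases l₃ with
            | nil => simp at hj3
            | cons y l₄ =>
              obtain ⟨hy, hj4⟩ := List.cons.injEq .. ▸ (by simpa using hj3 :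
                TSym.slash :: (flF G₁ ++ [TSym.cl]) = y :: (l₄ ++ TSym.op :: c''))
              subst hy
              have := main l₄ hj4 (by simp [hdStr])
              simpa [hA] using this

/-! ### Auxiliary head lemmas -/

theorem slash_not_flF_head : ∀ (G : List (Itm U)) (w : List (TSym U)),
    flF G = TSym.slash :: w → False := by
  intro G w h
  cases G with
  | nil => simp at h
  | cons j G' =>
    cases j with
    | ltr a => simp [flI] at h
    | node oa G₁ => rw [flF_cons, flI_node] at h; simp at h

theorem EvF_letters : ∀ (s : List U) (s' : List U),
    EvF q0 Δ (s.map Itm.ltr) s' → s' = s := by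
  intro s
  induction s with
  | nil => intro s' h; cases h; rfl
  | cons a s ih =>
    intro s' h
    rw [List.map_cons] at h
    cases h with
    | ltr h' => rw [ih _ h']

/-! ### Backward simulation -/

theorem step_back {F : List (Itm U)} {v : List (TSym U)}
    (h : GMove {q0} Δ (fun a => {a}) (flF F) v) :
    ∃ F', v = flF F' ∧ ∀ S, EvF q0 Δ F' S → EvF q0 Δ F S := by
  generalize hw : flF F = w at h
  cases h with
  | @init l r s a ha =>
    have ha' : a = q0 := ha
    obtain ⟨i, Rep, hG, hfl, hrep, hcong⟩ := align (q0 := q0) (Δ := Δ) (flF F).length F l (strOf s) r rfl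
      (by rw [hw]; simp) (by simp [strOf])
    obtain ⟨oa, G, rfl, hsh⟩ := flI_shape hfl
    cases oa with
    | some a' =>
      exfalso
      have : TSym.slash ∈ strOf s := by rw [← hsh]; simp [hdStr]
      exact strOf_no_slash this
    | none =>
      simp only [hdStr, List.nil_append] at hsh
      refine ⟨Rep (Itm.node (some a) G), ?_, ?_⟩
      · rw [hrep, flI_node]
        simp [hdStr, hsh]
      · intro S hev
        rw [hG]
        refine hcong _ _ S ?_ hev
        intro q hq
        obtain ⟨s', h1, h2⟩ := EvF_node_inv hq
        refine EvF_node_intro h1 ?_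
        simpa [ha'] using h2
  | @horiz l r s a b c hab =>
    obtain ⟨i, Rep, hG, hfl, hrep, hcong⟩ := align (q0 := q0) (Δ := Δ) (flF F).length F l
      (TSym.ltr a :: TSym.slash :: TSym.ltr b :: strOf s) r rfl
      (by rw [hw]; simp) (by simp [strOf])
    obtain ⟨oa, G, rfl, hsh⟩ := flI_shape hfl
    cases oa with
    | none =>
      exfalso
      simp only [hdStr, List.nil_append] at hsh
      cases G with
      | nil => simp at hsh
      | cons j G' =>
        cases j with
        | ltr x =>
          rw [flF_cons] at hsh
          simp only [flI, List.singleton_append, List.cons.injEq] at hsh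
          exact slash_not_flF_head G' _ hsh.2
        | node oa' G₁ => rw [flF_cons, flI_node] at hsh; simp at hsh
    | some a' =>
      simp only [hdStr, List.cons_append, List.nil_append, List.cons.injEq] at hsh
      obtain ⟨ha', -, hsh2⟩ := hsh
      have ha'' : a' = a := by injection ha'
      subst ha''
      have hG' : G = (b :: s).map Itm.ltr := flF_letters G (b :: s) (by simpa [strOf] using hsh2)
      subst hG'
      refine ⟨Rep (Itm.node (some c) (s.map Itm.ltr)), ?_, ?_⟩
      · rw [hrep, flI_node]
        simp [hdStr, strOf]
      · intro S hev
        rw [hG]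
        refine hcong _ _ S ?_ hev
        intro q hq
        obtain ⟨s', h1, h2⟩ := EvF_node_inv hq
        refine EvF_node_intro (EvF.ltr h1) ?_
        exact FASteps.cons hab h2
  | @vert l r a b hb =>
    have hb' : b = a := hb
    obtain ⟨i, Rep, hG, hfl, hrep, hcong⟩ := align (q0 := q0) (Δ := Δ) (flF F).length F l
      [TSym.ltr a, TSym.slash] r rfl
      (by rw [hw]; simp) (by simp)
    obtain ⟨oa, G, rfl, hsh⟩ := flI_shape hfl
    cases oa with
    | none =>
      exfalso
      simp only [hdStr, List.nil_append] at hsh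
      cases G with
      | nil => simp at hsh
      | cons j G' =>
        cases j with
        | ltr x =>
          rw [flF_cons] at hsh
          simp only [flI, List.singleton_append, List.cons.injEq] at hsh
          exact slash_not_flF_head G' _ hsh.2
        | node oa' G₁ => rw [flF_cons, flI_node] at hsh; simp at hsh
    | some a' =>
      simp only [hdStr, List.cons_append, List.nil_append, List.cons.injEq] at hsh
      obtain ⟨ha', -, hsh2⟩ := hsh
      have ha'' : a' = a := by injection ha'
      subst ha''
      have hG' : G = [] := flF_eq_nil (by simpa using hsh2)
      subst hG'
      refine ⟨Rep (Itm.ltr b), ?_, ?_⟩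
      · rw [hrep]; simp [flI]
      · intro S hev
        rw [hG]
        refine hcong _ _ S ?_ hev
        intro q hq
        have hq' : q = b := EvF_ltr_val hq
        rw [hq', hb']
        exact EvF_node_intro EvF.nil (FASteps.nil _)

theorem final_shape : ∀ (F : List (Itm U)) (q : U),
    flF F = [TSym.op, TSym.ltr q, TSym.slash, TSym.cl] → F = [Itm.node (some q) []] := by
  intro F q h
  cases F with
  | nil => simp at h
  | cons j F' =>
    cases j with
    | ltr a => simp [flI] at h
    | node oa G =>
      rw [flF_cons, flI_node] at h
      cases oa with
      | none =>
        exfalso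
        simp only [hdStr, List.nil_append, List.cons_append, List.cons.injEq, true_and] at h
        cases G with
        | nil => simp at h
        | cons j' G₁ =>
          cases j' with
          | ltr x =>
            rw [flF_cons] at h
            simp only [flI, List.singleton_append, List.cons_append, List.cons.injEq] at h
            obtain ⟨-, h⟩ := h
            cases G₁ with
            | nil => simp at h
            | cons j'' G₂ =>
              cases j'' with
              | ltr y => simp [flI] at h
              | node oa₂ G₃ => rw [flF_cons, flI_node] at h; simp at h
          | node oa₁ G₂ => rw [flF_cons, flI_node] at h; simp at h
      | some a =>
        simp only [hdStr, List.cons_append, List.nil_append, List.cons.injEq, true_and] at h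
        obtain ⟨ha, h⟩ := h
        have ha' : a = q := by injection ha
        subst ha'
        cases G with
        | nil =>
          have h' : flF F' = [] := by simpa using h
          rw [flF_eq_nil h']
        | cons j' G₁ =>
          exfalso
          rw [flF_cons] at h
          cases j' with
          | ltr x => simp [flI] at h
          | node oa₂ G₃ => rw [flI_node] at h; simp at h

theorem back {qf : U} : ∀ {w : List (TSym U)},
    Relation.ReflTransGen (GMove {q0} Δ (fun a => {a})) w (finalTree qf) →
    ∀ F, w = flF F → EvF q0 Δ F [qf] := by
  intro w h
  induction h using Relation.ReflTransGen.head_induction_on with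
  | refl =>
    intro F hF
    have hF' : F = [Itm.node (some qf) []] := final_shape F qf (by rw [← hF]; rfl)
    subst hF'
    exact EvF.node EvF.nil (FASteps.nil _) EvF.nil
  | head hstep _ ih =>
    intro F hF
    subst hF
    obtain ⟨F', hv, htr⟩ := step_back hstep
    exact htr [qf] (ih F' hv)

/-! ### Forward simulation -/

theorem hchain {a q : U} {s : List U} (h : FASteps (dOf Δ) a s q) :
    ∀ l r : List (TSym U), Relation.ReflTransGen (GMove {q0} Δ (fun x => {x}))
      (l ++ [TSym.op, TSym.ltr a, TSym.slash] ++ (strOf s ++ ([TSym.cl] ++ r)))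
      (l ++ [TSym.op, TSym.ltr q, TSym.slash] ++ ([TSym.cl] ++ r)) := by
  induction h with
  | nil =>
    intro l r
    simp only [strOf, List.map_nil, List.nil_append]
    exact Relation.ReflTransGen.refl
  | @cons p b p' s' q' hmem hrest ih =>
    intro l r
    refine Relation.ReflTransGen.head ?_ (ih l r)
    have := GMove.horiz (Q0 := {q0}) (Δ := Δ) (γ := fun x => {x}) (l := l) (r := r) (s := s')
      (a := p) (b := b) (c := p') hmem
    simpa [strOf, flI] using this

theorem fwd {G : List (Itm U)} {s : List U} (h : EvF q0 Δ G s) :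
    ∀ l r : List (TSym U), Relation.ReflTransGen (GMove {q0} Δ (fun x => {x}))
      (l ++ (flF G ++ r)) (l ++ (strOf s ++ r)) := by
  induction h with
  | nil => intro l r; exact Relation.ReflTransGen.refl
  | @ltr a G' s' h' ih =>
    intro l r
    have := ih (l ++ [TSym.ltr a]) r
    simpa [strOf, flI] using this
  | @node oa G' s' q G'' s'' h1 hrun h2 ih1 ih2 =>
    intro l r
    have phase1 := ih1 (l ++ (TSym.op :: hdStr oa)) ([TSym.cl] ++ (flF G'' ++ r))
    have phase4 := ih2 (l ++ [TSym.ltr q]) r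
    have phase2 : Relation.ReflTransGen (GMove {q0} Δ (fun x => {x}))
        (l ++ (TSym.op :: hdStr oa) ++ (strOf s' ++ ([TSym.cl] ++ (flF G'' ++ r))))
        (l ++ [TSym.op, TSym.ltr q, TSym.slash] ++ ([TSym.cl] ++ (flF G'' ++ r))) := by
      cases oa with
      | none =>
        refine Relation.ReflTransGen.head ?_ (hchain hrun l (flF G'' ++ r))
        have := GMove.init (Q0 := {q0}) (Δ := Δ) (γ := fun x => {x}) (l := l)
          (r := flF G'' ++ r) (s := s') (a := q0) rfl
        simpa [hdStr] using this
      | some a =>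
        have := hchain (q0 := q0) hrun l (flF G'' ++ r)
        simpa [hdStr] using this
    have phase3 : Relation.ReflTransGen (GMove {q0} Δ (fun x => {x}))
        (l ++ [TSym.op, TSym.ltr q, TSym.slash] ++ ([TSym.cl] ++ (flF G'' ++ r)))
        (l ++ [TSym.ltr q] ++ (flF G'' ++ r)) := by
      refine Relation.ReflTransGen.single ?_
      have := GMove.vert (Q0 := {q0}) (Δ := Δ) (γ := fun x => {x}) (l := l)
        (r := flF G'' ++ r) (a := q) (b := q) rfl
      simpa using this
    have hstart : l ++ (flF (Itm.node oa G' :: G'') ++ r)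
        = l ++ (TSym.op :: hdStr oa) ++ (flF G' ++ ([TSym.cl] ++ (flF G'' ++ r))) := by
      rw [flF_cons, flI_node]; simp
    have hend : l ++ (strOf (q :: s'') ++ r) = l ++ [TSym.ltr q] ++ (strOf s'' ++ r) := by
      simp [strOf]
    rw [hstart, hend]
    exact Relation.ReflTransGen.trans phase1 (Relation.ReflTransGen.trans phase2
      (Relation.ReflTransGen.trans phase3 phase4))

theorem accept_fwd {G : List (Itm U)} {q : U} (h : EvF q0 Δ [Itm.node none G] [q]) :
    Relation.ReflTransGen (GMove {q0} Δ (fun a => {a})) (flI (Itm.node none G)) (finalTree q) := by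
  obtain ⟨s', h1, hrun⟩ := EvF_node_inv h
  have phase1 := fwd h1 [TSym.op] [TSym.cl]
  have step1 : GMove {q0} Δ (fun a => {a}) ([TSym.op] ++ (strOf s' ++ [TSym.cl]))
      ([TSym.op, TSym.ltr q0, TSym.slash] ++ (strOf s' ++ [TSym.cl])) := by
    have := GMove.init (Q0 := {q0}) (Δ := Δ) (γ := fun x => {x}) (l := [])
      (r := []) (s := s') (a := q0) rfl
    simpa using this
  have phase2 : Relation.ReflTransGen (GMove {q0} Δ (fun a => {a}))
      ([TSym.op] ++ (strOf s' ++ [TSym.cl])) (finalTree q) := by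
    refine Relation.ReflTransGen.head step1 ?_
    have := hchain (q0 := q0) hrun [] []
    simpa [finalTree] using this
  have hstart : flI (Itm.node none G) = [TSym.op] ++ (flF G ++ [TSym.cl]) := by
    rw [flI_node]; simp [hdStr]
  rw [hstart]
  exact Relation.ReflTransGen.trans (phase1) phase2

/-! ### Items of terms, pure items -/

theorem EvF_nil_inv {S : List U} (h : EvF q0 Δ [] S) : S = [] := by
  cases h; rfl

def itemOf : PreTerm U → Itm U
  | PreTerm.node f ts => Itm.node none (Itm.ltr f :: (ts.attach.map fun x => itemOf x.1))
  decreasing_by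
    simp only [PreTerm.node.sizeOf_spec]
    have h := List.sizeOf_lt_of_mem x.2
    omega

theorem itemOf_eq (f : U) (ts : List (PreTerm U)) :
    itemOf (PreTerm.node f ts) = Itm.node none (Itm.ltr f :: ts.map itemOf) := by
  rw [itemOf]
  congr 1
  simp [List.attach_map_val]

theorem tau_eq (f : U) (ts : List (PreTerm U)) :
    tau (PreTerm.node f ts)
      = TSym.op :: (TSym.ltr f :: ((ts.map tau).flatten ++ [TSym.cl])) := by
  rw [tau]
  congr 2
  simp [List.attach_map_val]

theorem flI_itemOf : ∀ (n : ℕ) (t : PreTerm U), sizeOf t = n → flI (itemOf t) = tau t := by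
  intro n
  induction n using Nat.strong_induction_on with
  | _ n ih =>
  intro t hn
  cases t with
  | node f ts =>
    have hmapeq : List.map (flI ∘ itemOf) ts = List.map tau ts := by
      apply List.map_congr_left
      intro t' ht'
      have hlt : sizeOf t' < n := by
        subst hn
        have h := List.sizeOf_lt_of_mem ht'
        simp only [PreTerm.node.sizeOf_spec]
        omega
      exact ih _ hlt t' rfl
    have hfl : flF (ts.map itemOf) = (List.map tau ts).flatten := by
      show ((ts.map itemOf).map flI).flatten = _
      rw [List.map_map, hmapeq]
    rw [itemOf_eq, tau_eq, flI_node]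
    simp only [hdStr, List.nil_append, flF_cons, flI, List.singleton_append, hfl]
    simp

inductive PureI (Sa : Set U) : Itm U → Prop where
  | ltr {a : U} : a ∈ Sa → PureI Sa (Itm.ltr a)
  | node {G : List (Itm U)} : (∀ j ∈ G, PureI Sa j) → PureI Sa (Itm.node none G)

/-! ### `tau` images are string trees -/

theorem flatten_tree {Sa : Set U} : ∀ (L : List (List (TSym U))),
    (∀ u ∈ L, IsTree (ltrs Sa) u) → ∀ x, IsTree (ltrs Sa) (TSym.op :: (x ++ [TSym.cl])) →
    IsTree (ltrs Sa) (TSym.op :: ((x ++ L.flatten) ++ [TSym.cl])) := by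
  intro L
  induction L with
  | nil => intro _ x hx; simpa using hx
  | cons u L ih =>
    intro hmem x hx
    have hu : IsTree (ltrs Sa) u := hmem u (List.mem_cons_self)
    have h1 : IsTree (ltrs Sa) (TSym.op :: ((x ++ u) ++ [TSym.cl])) :=
      IsTree.concat hx (IsTree.encap hu)
    have := ih (fun v hv => hmem v (List.mem_cons_of_mem _ hv)) (x ++ u) h1
    simpa [List.append_assoc] using this

theorem good_tree {Sa : Set U} {ar : U → ℕ} :
    ∀ (n : ℕ) (t : PreTerm U), sizeOf t = n → GoodTerm Sa ar t → IsTree (ltrs Sa) (tau t) := by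
  intro n
  induction n using Nat.strong_induction_on with
  | _ n ih =>
  intro t hn hg
  cases t with
  | node f ts =>
    cases hg with
    | node hf hlen hsub =>
    rw [tau_eq]
    have hbase : IsTree (ltrs Sa) (TSym.op :: ([TSym.ltr f] ++ [TSym.cl])) :=
      IsTree.single ⟨f, hf, rfl⟩
    have := flatten_tree (ts.map tau) ?_ [TSym.ltr f] hbase
    · simpa using this
    · intro u hu
      obtain ⟨t', ht', rfl⟩ := List.mem_map.mp hu
      have hlt : sizeOf t' < n := by
        subst hn
        have h := List.sizeOf_lt_of_mem ht'
        simp only [PreTerm.node.sizeOf_spec]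
        omega
      exact ih _ hlt t' rfl (hsub t' ht')

/-! ### String trees are flattenings of pure items -/

theorem tree_item {Sa : Set U} : ∀ {t : List (TSym U)}, IsTree (ltrs Sa) t →
    ∃ G, (∀ j ∈ G, PureI Sa j) ∧ t = flI (Itm.node none G) := by
  intro t h
  induction h with
  | nil => exact ⟨[], by simp, by rw [flI_node]; simp [hdStr]⟩
  | @single x hx =>
    obtain ⟨a, ha, rfl⟩ := hx
    refine ⟨[Itm.ltr a], ?_, by rw [flI_node]; simp [hdStr, flI]⟩
    intro j hj
    rw [List.mem_singleton.mp hj]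
    exact PureI.ltr ha
  | @concat x y h1 h2 ih1 ih2 =>
    obtain ⟨G1, hp1, he1⟩ := ih1
    obtain ⟨G2, hp2, he2⟩ := ih2
    have hx1 : flF G1 = x := by
      rw [flI_node] at he1
      simp only [hdStr, List.nil_append, List.cons.injEq, true_and] at he1
      have := List.append_inj' he1 (by simp)
      exact this.1.symm
    have hx2 : flF G2 = y := by
      rw [flI_node] at he2
      simp only [hdStr, List.nil_append, List.cons.injEq, true_and] at he2
      have := List.append_inj' he2 (by simp)
      exact this.1.symm
    refine ⟨G1 ++ G2, ?_, ?_⟩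
    · intro j hj
      rcases List.mem_append.mp hj with hj | hj
      · exact hp1 j hj
      · exact hp2 j hj
    · rw [flI_node]
      simp [hdStr, hx1, hx2]
  | @encap t' h' ih =>
    obtain ⟨G, hp, he⟩ := ih
    refine ⟨[Itm.node none G], ?_, ?_⟩
    · intro j hj
      rw [List.mem_singleton.mp hj]
      exact PureI.node hp
    · rw [flI_node, he]
      simp [hdStr]

/-! ### Fresh states and finiteness helpers -/

theorem listfin {Qh : Set U} (hQh : Qh.Finite) (N : ℕ) :
    {l : List U | (∀ x ∈ l, x ∈ Qh) ∧ l.length < N}.Finite := by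
  have f1 : Finite ↥Qh := hQh.to_subtype
  have himg := (List.finite_length_lt ↥Qh N).image (List.map Subtype.val)
  apply Set.Finite.subset himg
  rintro l ⟨hmem, hlen⟩
  refine ⟨l.pmap (fun a h => (⟨a, h⟩ : ↥Qh)) hmem, by simpa using hlen, ?_⟩
  simp [List.map_pmap]

open Cardinal in
theorem exists_fresh [Infinite U] {Sa : Set U} (hSa : Sa.Finite) :
    ∃ ι : Option (U ⊕ U × List U) → U, Function.Injective ι ∧ ∀ x, ι x ∉ Sa := by
  have h1 : #(Option (U ⊕ U × List U)) ≤ #(↥(Saᶜ)) := by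
    have hc : (Saᶜ).Infinite := hSa.infinite_compl
    have hal : ℵ₀ ≤ #(↥(Saᶜ)) := Cardinal.infinite_iff.mp hc.to_subtype
    have hU : #U ≤ #(↥(Saᶜ)) := by
      have hsum := Cardinal.mk_sum_compl Sa
      have hS : #(↥Sa) ≤ #(↥(Saᶜ)) :=
        le_trans (le_of_lt (@Cardinal.lt_aleph0_of_finite _ hSa.to_subtype)) hal
      calc #U = #(↥Sa) + #(↥(Saᶜ)) := hsum.symm
        _ ≤ #(↥(Saᶜ)) + #(↥(Saᶜ)) := add_le_add_left hS _
        _ = #(↥(Saᶜ)) := Cardinal.add_eq_self hal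
    have hlist : #(List U) = #U := Cardinal.mk_list_eq_mk U
    have haU : ℵ₀ ≤ #U := Cardinal.infinite_iff.mp ‹Infinite U›
    calc #(Option (U ⊕ U × List U)) = #(U ⊕ U × List U) + 1 := Cardinal.mk_option
      _ = #U + #U * #(List U) + 1 := by simp [Cardinal.mk_sum, Cardinal.mk_prod]
      _ = #U + #U * #U + 1 := by rw [hlist]
      _ = #U := by
          rw [Cardinal.mul_eq_self haU, Cardinal.add_eq_self haU]
          exact Cardinal.add_one_eq haU
      _ ≤ #(↥(Saᶜ)) := hU
  obtain ⟨f⟩ := Cardinal.le_def _ _ |>.mp h1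
  exact ⟨fun x => (f x).1, fun a b h => f.injective (Subtype.ext h), fun x => (f x).2⟩

end Aux


end StringTree

namespace StringTree

/-- Let `Â = (Q̂, F, Q̂_f, Δ̂)` be a non-deterministic
classical bottom-up finite tree automaton over a ranked alphabet `F`
recognising the term language `L̂ ⊆ T̂(F)`, and let `Σ` be the (unranked)
set of symbols of `F`.  Then there exists an NFSTA `(Σ, Q, Q_f, q₀, Δ)`
over `Σ` recognising `L = τ(L̂)`. -/
theorem ncfta_to_nfsta {U : Type} [Infinite U] (Sa : Set U) (ar : U → ℕ)
    (hSa : Sa.Finite) (Qh Qhf : Set U) (hQh : Qh.Finite) (hQhf : Qhf ⊆ Qh)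
    (Δh : Set (U × List U × U))
    (hΔh : ∀ r ∈ Δh, r.1 ∈ Sa ∧ r.2.1.length = ar r.1 ∧
      (∀ q ∈ r.2.1, q ∈ Qh) ∧ r.2.2 ∈ Qh) :
    ∃ (Q Qf : Set U) (q0 : U) (Δ : Set (U × U × U)),
      NWF Sa Q Qf q0 Δ ∧
      NLang Sa q0 Δ Qf = tau '' TermLang Sa ar Δh Qhf := by
  classical
  obtain ⟨ι, hinj, hfresh⟩ := exists_fresh hSa
  set q0 : U := ι none with hq0def
  set stQ : U → U := fun q => ι (some (Sum.inl q)) with hstQdef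
  set stP : U → List U → U := fun f lq => ι (some (Sum.inr (f, lq))) with hstPdef
  have hQQ : ∀ {x y : U}, stQ x = stQ y → x = y := by
    intro x y h; have := hinj h; simpa using this
  have hPP : ∀ {f l f' l'}, stP f l = stP f' l' → f = f' ∧ l = l' := by
    intro f l f' l' h; have := hinj h; simpa [Prod.ext_iff] using this
  have hPQ : ∀ {f l x}, stP f l ≠ stQ x := by
    intro f l x h; have := hinj h; simp at this
  have hQ0Q : ∀ {x}, q0 ≠ stQ x := by
    intro x h; have := hinj h; simp at this
  have hQ0P : ∀ {f l}, q0 ≠ stP f l := by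
    intro f l h; have := hinj h; simp at this
  have hQSa : ∀ {x}, stQ x ∉ Sa := fun {x} => hfresh _
  have hq0Sa : q0 ∉ Sa := hfresh _
  have fanil : ∀ (δ : U → U → Set U) (x y : U), FASteps δ x ([] : List U) y → x = y := by
    intro δ x y h; cases h; rfl
  set Δ : Set (U × U × U) := {p | (∃ f, f ∈ Sa ∧ 0 < ar f ∧ p = (q0, f, stP f []))
    ∨ (∃ f q, (f, ([] : List U), q) ∈ Δh ∧ p = (q0, f, stQ q))
    ∨ (∃ f lq q', f ∈ Sa ∧ (∀ x ∈ lq, x ∈ Qh) ∧ q' ∈ Qh ∧ lq.length + 1 < ar f ∧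
        p = (stP f lq, stQ q', stP f (lq ++ [q'])))
    ∨ (∃ f lq q' q, (f, lq ++ [q'], q) ∈ Δh ∧ p = (stP f lq, stQ q', stQ q))} with hΔdef
  set Qf : Set U := stQ '' Qhf with hQfdef
  set PS : Set U := (fun p : U × List U => stP p.1 p.2) ''
      {p : U × List U | p.1 ∈ Sa ∧ (∀ x ∈ p.2, x ∈ Qh) ∧ p.2.length < ar p.1} with hPSdef
  set Q : Set U := Sa ∪ ({q0} ∪ (stQ '' Qh ∪ PS)) with hQdef
  -- output states of Δ are ι-images
  have hout : ∀ a b c : U, (a, b, c) ∈ Δ → ∃ z, c = ι z := by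
    intro a b c hm
    rcases hm with ⟨f, -, -, heq⟩ | ⟨f, q, -, heq⟩ | ⟨f, lq, q', -, -, -, -, heq⟩
      | ⟨f, lq, q', q, -, heq⟩ <;>
      (simp only [Prod.mk.injEq] at heq; exact ⟨_, heq.2.2⟩)
  -- no transitions out of stQ states
  have nostep : ∀ (s : List U) (x y : U), FASteps (dOf Δ) (stQ x) s y → s = [] ∧ y = stQ x := by
    intro s x y h
    cases h with
    | nil => exact ⟨rfl, rfl⟩
    | cons hmem _ =>
      exfalso
      rcases hmem with ⟨f, -, -, heq⟩ | ⟨f, q, -, heq⟩ | ⟨f, lq, q', -, -, -, -, heq⟩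
        | ⟨f, lq, q', q, -, heq⟩ <;>
        simp only [Prod.mk.injEq] at heq
      · exact hQ0Q heq.1.symm
      · exact hQ0Q heq.1.symm
      · exact hPQ heq.1.symm
      · exact hPQ heq.1.symm
  -- runs end where they start or at ι-images
  have runend : ∀ (p : U) (s : List U) (v : U), FASteps (dOf Δ) p s v → v = p ∨ ∃ z, v = ι z := by
    intro p s v h
    induction h with
    | nil => left; rfl
    | cons hmem hrest ih =>
      right
      rcases ih with rfl | hz
      · exact hout _ _ _ hmem
      · exact hz
  -- decoding of runs from partial states
  have rundec2 : ∀ (s : List U) (f : U) (pre : List U) (qh : U),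
      FASteps (dOf Δ) (stP f pre) s (stQ qh) →
      ∃ qs, s = qs.map stQ ∧ (f, pre ++ qs, qh) ∈ Δh := by
    intro s
    induction s with
    | nil =>
      intro f pre qh h
      exact absurd (fanil _ _ _ h) hPQ
    | cons a s' ih =>
      intro f pre qh h
      cases h with
      | cons hmem hrest =>
        rcases hmem with ⟨f', -, -, heq⟩ | ⟨f', q, -, heq⟩
          | ⟨f', lq, q', hf', hlq, hq', hlenl, heq⟩ | ⟨f', lq, q', q, hr, heq⟩ <;>
          simp only [Prod.mk.injEq] at heq
        · exact absurd heq.1.symm hQ0P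
        · exact absurd heq.1.symm hQ0P
        · obtain ⟨hff, hll⟩ := hPP heq.1
          subst hff; subst hll
          obtain ⟨qs', rfl, hrule⟩ := ih f (pre ++ [q']) qh (heq.2.2 ▸ hrest)
          refine ⟨q' :: qs', by simp [heq.2.1], by simpa using hrule⟩
        · obtain ⟨hff, hll⟩ := hPP heq.1
          subst hff; subst hll
          obtain ⟨hs', hyq⟩ := nostep _ _ _ (heq.2.2 ▸ hrest)
          subst hs'
          have hqq : q = qh := hQQ hyq.symm
          subst hqq
          exact ⟨[q'], by simp [heq.2.1], hr⟩
  have rundec : ∀ (s : List U) (qh : U), FASteps (dOf Δ) q0 s (stQ qh) →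
      ∃ f qs, s = f :: qs.map stQ ∧ (f, qs, qh) ∈ Δh := by
    intro s qh h
    cases s with
    | nil => exact absurd (fanil _ _ _ h) hQ0Q
    | cons a s' =>
    cases h with
    | cons hmem hrest =>
      rcases hmem with ⟨f, hf, har, heq⟩ | ⟨f, q, hr, heq⟩
        | ⟨f, lq, q', -, -, -, -, heq⟩ | ⟨f, lq, q', q, -, heq⟩ <;>
        simp only [Prod.mk.injEq] at heq
      · obtain ⟨qs, rfl, hrule⟩ := rundec2 _ f [] qh (heq.2.2 ▸ hrest)
        exact ⟨f, qs, by rw [heq.2.1], by simpa using hrule⟩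
      · obtain ⟨hs', hyq⟩ := nostep _ _ _ (heq.2.2 ▸ hrest)
        subst hs'
        have hqq : q = qh := hQQ hyq.symm
        subst hqq
        exact ⟨f, [], by simp [heq.2.1], hr⟩
      · exact absurd heq.1 hQ0P
      · exact absurd heq.1 hQ0P
  -- building runs
  have runbuild : ∀ (suf pre : List U) (f qh : U), (f, pre ++ suf, qh) ∈ Δh → suf ≠ [] →
      FASteps (dOf Δ) (stP f pre) (suf.map stQ) (stQ qh) := by
    intro suf
    induction suf with
    | nil => intro _ _ _ h hne; exact absurd rfl hne
    | cons q' suf ih =>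
      intro pre f qh hrule _
      cases suf with
      | nil =>
        refine FASteps.cons ?_ (FASteps.nil _)
        exact Or.inr (Or.inr (Or.inr ⟨f, pre, q', qh, by simpa using hrule, rfl⟩))
      | cons q'' suf' =>
        refine FASteps.cons ?_ (ih (pre ++ [q']) f qh (by simpa using hrule) (by simp))
        have hstats := hΔh _ hrule
        refine Or.inr (Or.inr (Or.inl ⟨f, pre, q', hstats.1, ?_, ?_, ?_, rfl⟩))
        · intro x hx
          exact hstats.2.2.1 x (by simp [hx])
        · exact hstats.2.2.1 q' (by simp)
        · have := hstats.2.1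
          simp at this
          omega
  -- terms to evaluations
  have evtau : ∀ (n : ℕ) (t : PreTerm U), sizeOf t = n → GoodTerm Sa ar t →
      ∀ qh, CRun Δh t qh → EvF q0 Δ [itemOf t] [stQ qh] := by
    intro n
    induction n using Nat.strong_induction_on with
    | _ n ih =>
    intro t hn hgood qh hrun
    cases t with
    | node f ts =>
      cases hrun with
      | @node _ _ qs _ hrule hlen hsub =>
      cases hgood with
      | node hf hlents hsubg =>
      rw [itemOf_eq]
      have hstats := hΔh _ hrule
      have hsz : ∀ t' ∈ ts, sizeOf t' < n := by
        intro t' ht'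
        subst hn
        have h := List.sizeOf_lt_of_mem ht'
        simp only [PreTerm.node.sizeOf_spec]
        omega
      have hfargs0 : ∀ (ts' : List (PreTerm U)) (qs' : List U), qs'.length = ts'.length →
          (∀ t' ∈ ts', sizeOf t' < n) → (∀ t' ∈ ts', GoodTerm Sa ar t') →
          (∀ p ∈ ts'.zip qs', CRun Δh p.1 p.2) →
          EvF q0 Δ (ts'.map itemOf) (qs'.map stQ) := by
        intro ts'
        induction ts' with
        | nil =>
          intro qs' hl _ _ _
          cases qs' with
          | nil => exact EvF.nil
          | cons => simp at hl
        | cons t' ts'' ihts =>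
          intro qs' hl hsz' hsubg' hsub'
          cases qs' with
          | nil => simp at hl
          | cons q' qs'' =>
            rw [List.map_cons, List.map_cons, EvF_cons_iff]
            refine ⟨stQ q', qs''.map stQ, rfl, ?_, ?_⟩
            · exact ih _ (hsz' t' (by simp)) t' rfl (hsubg' t' (by simp)) q'
                (hsub' (t', q') (by simp))
            · refine ihts qs'' (by simpa using hl) ?_ ?_ ?_
              · intro t'' ht''; exact hsz' t'' (by simp [ht''])
              · intro t'' ht''; exact hsubg' t'' (by simp [ht''])
              · intro p hp; exact hsub' p (by simp [hp])
      have hfargs : EvF q0 Δ (ts.map itemOf) (qs.map stQ) :=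
        hfargs0 ts qs hlen hsz hsubg hsub
      have hrunq : FASteps (dOf Δ) q0 (f :: qs.map stQ) (stQ qh) := by
        cases qs with
        | nil =>
          refine FASteps.cons ?_ (FASteps.nil _)
          exact Or.inr (Or.inl ⟨f, qh, hrule, rfl⟩)
        | cons q1 qs' =>
          refine FASteps.cons ?_ (runbuild (q1 :: qs') [] f qh (by simpa using hrule) (by simp))
          refine Or.inl ⟨f, hf, ?_, rfl⟩
          have := hstats.2.1
          simp at this
          omega
      refine EvF_node_intro ?_ (by simpa using hrunq)
      exact EvF.ltr hfargs
  -- decoding of pure evaluated forests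
  have decode : ∀ (n : ℕ) (G : List (Itm U)), sizeOf G = n → (∀ j ∈ G, PureI Sa j) →
      ∀ qs : List U, EvF q0 Δ G (qs.map stQ) →
      ∃ ts : List (PreTerm U), ts.length = qs.length ∧
        (∀ p ∈ ts.zip qs, CRun Δh p.1 p.2) ∧ (∀ t' ∈ ts, GoodTerm Sa ar t') ∧
        flF G = (ts.map tau).flatten := by
    intro n
    induction n using Nat.strong_induction_on with
    | _ n ihn =>
    intro G hn hpure qs hev
    cases G with
    | nil =>
      have := EvF_nil_inv hev
      cases qs with
      | nil => exact ⟨[], rfl, by simp, by simp, by simp⟩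
      | cons => simp at this
    | cons j G' =>
      rw [EvF_cons_iff] at hev
      obtain ⟨v, s, hS, hj, hG'⟩ := hev
      cases qs with
      | nil => simp at hS
      | cons qh qs' =>
        simp only [List.map_cons, List.cons.injEq] at hS
        obtain ⟨hv, hs⟩ := hS
        subst hv
        subst hs
        cases j with
        | ltr a =>
          exfalso
          have hva := EvF_ltr_val hj
          have ha : a ∈ Sa := by
            have := hpure _ (List.mem_cons_self)
            cases this with
            | ltr h => exact h
          rw [← hva] at ha
          exact hQSa ha
        | node oa G₁ =>
          have hoa : oa = none := by
            have := hpure _ (List.mem_cons_self)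
            cases this with
            | node _ => rfl
          subst hoa
          have hpure₁ : ∀ j' ∈ G₁, PureI Sa j' := by
            have := hpure _ (List.mem_cons_self)
            cases this with
            | node h => exact h
          obtain ⟨s₁, hev₁, hrun₁⟩ := EvF_node_inv hj
          obtain ⟨f, qs₁, rfl, hrule⟩ := rundec _ _ (by simpa using hrun₁)
          have hstats := hΔh _ hrule
          cases G₁ with
          | nil => exact absurd (EvF_nil_inv hev₁) (by simp)
          | cons j₁ G₂ =>
            rw [EvF_cons_iff] at hev₁
            obtain ⟨v₁, s₂, hS₁, hj₁, hG₂⟩ := hev₁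
            simp only [List.cons.injEq] at hS₁
            obtain ⟨hv₁, hs₂⟩ := hS₁
            cases j₁ with
            | node oa₁ G₃ =>
              exfalso
              have hoa₁ : oa₁ = none := by
                have := hpure₁ _ (List.mem_cons_self)
                cases this with
                | node _ => rfl
              subst hoa₁
              obtain ⟨s₃, -, hrun₃⟩ := EvF_node_inv hj₁
              rcases runend _ _ _ (by simpa using hrun₃) with hvq | ⟨z, hvz⟩
              · rw [← hv₁] at hvq
                rw [hvq] at hstats
                exact hq0Sa hstats.1
              · rw [← hv₁] at hvz
                rw [hvz] at hstats
                exact hfresh z hstats.1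
            | ltr b =>
              have hbf : b = f := by
                have hvb := EvF_ltr_val hj₁
                rw [hv₁]; exact hvb.symm
              subst hbf
              subst hs₂
              have hsz₂ : sizeOf G₂ < n := by
                subst hn
                simp only [List.cons.sizeOf_spec, Itm.node.sizeOf_spec, Itm.ltr.sizeOf_spec]
                omega
              have hsz' : sizeOf G' < n := by
                subst hn
                simp only [List.cons.sizeOf_spec]
                omega
              obtain ⟨ts₁, hlen₁, hzip₁, hgood₁, hfl₁⟩ := ihn _ hsz₂ G₂ rfl
                (fun j' hj' => hpure₁ j' (by simp [hj'])) qs₁ hG₂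
              obtain ⟨ts', hlen', hzip', hgood', hfl'⟩ := ihn _ hsz' G' rfl
                (fun j' hj' => hpure j' (by simp [hj'])) qs' hG'
              refine ⟨PreTerm.node b ts₁ :: ts', by simp [hlen'], ?_, ?_, ?_⟩
              · intro p hp
                rcases List.mem_cons.mp hp with rfl | hp
                · exact CRun.node hrule hlen₁.symm hzip₁
                · exact hzip' p hp
              · intro t'' ht''
                rcases List.mem_cons.mp ht'' with rfl | ht''
                · refine GoodTerm.node hstats.1 ?_ hgood₁
                  rw [hlen₁]
                  have := hstats.2.1
                  simpa using this
                · exact hgood' t'' ht''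
              · rw [flF_cons, flI_node]
                simp only [List.map_cons, List.flatten_cons, tau_eq]
                simp [hdStr, hfl₁, hfl', flI]
  refine ⟨Q, Qf, q0, Δ, ⟨?_, ?_, ?_, ?_, ?_⟩, ?_⟩
  · -- Q.Finite
    rw [hQdef]
    refine hSa.union ((Set.finite_singleton q0).union ((hQh.image stQ).union ?_))
    rw [hPSdef]
    refine Set.Finite.image _ (Set.Finite.subset
      (Set.Finite.biUnion hSa fun f _ => (Set.finite_singleton f).prod (listfin hQh (ar f))) ?_)
    rintro ⟨f, l⟩ ⟨h1, h2, h3⟩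
    simp only [Set.mem_iUnion]
    exact ⟨f, h1, Set.mk_mem_prod rfl ⟨h2, h3⟩⟩
  · -- Sa ⊆ Q
    rw [hQdef]; exact Set.subset_union_left
  · -- Qf ⊆ Q
    rw [hQdef, hQfdef]
    rintro x ⟨qh, hqh, rfl⟩
    exact Or.inr (Or.inr (Or.inl ⟨qh, hQhf hqh, rfl⟩))
  · -- q0 ∈ Q
    rw [hQdef]; exact Or.inr (Or.inl rfl)
  · -- rules over Q
    have memQ0 : q0 ∈ Q := by rw [hQdef]; exact Or.inr (Or.inl rfl)
    have memSa : ∀ {x}, x ∈ Sa → x ∈ Q := fun {x} hx => by rw [hQdef]; exact Or.inl hx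
    have memQh : ∀ {x}, x ∈ Qh → stQ x ∈ Q := fun {x} hx => by
      rw [hQdef]; exact Or.inr (Or.inr (Or.inl ⟨_, hx, rfl⟩))
    have memP : ∀ {f l}, f ∈ Sa → (∀ x ∈ l, x ∈ Qh) → l.length < ar f → stP f l ∈ Q := by
      intro f l h1 h2 h3
      rw [hQdef]
      exact Or.inr (Or.inr (Or.inr ⟨(f, l), ⟨h1, h2, h3⟩, rfl⟩))
    rintro ⟨a, b, c⟩ hp
    rcases hp with ⟨f, hf, har, heq⟩ | ⟨f, q, hr, heq⟩
      | ⟨f, lq, q', hf, hlq, hq', hlenl, heq⟩ | ⟨f, lq, q', q, hr, heq⟩ <;>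
      (simp only [Prod.mk.injEq] at heq; obtain ⟨rfl, rfl, rfl⟩ := heq)
    · exact ⟨memQ0, memSa hf, memP hf (by simp) (by simpa using har)⟩
    · have hstats := hΔh _ hr
      exact ⟨memQ0, memSa hstats.1, memQh hstats.2.2.2⟩
    · refine ⟨memP hf hlq (by omega), memQh hq', memP hf ?_ (by simp; omega)⟩
      intro x hx
      rcases List.mem_append.mp hx with hx | hx
      · exact hlq x hx
      · rw [List.mem_singleton.mp hx]; exact hq'
    · have hstats := hΔh _ hr
      have hlenr : lq.length + 1 = ar f := by
        have := hstats.2.1; simpa using this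
      refine ⟨memP hstats.1 (fun x hx => hstats.2.2.1 x (by simp [hx])) (by omega),
        memQh (hstats.2.2.1 q' (by simp)), memQh hstats.2.2.2⟩
  · -- language equality
    apply Set.eq_of_subset_of_subset
    · rintro t ⟨htree, hacc⟩
      obtain ⟨qf, hqf, hsteps⟩ := hacc
      obtain ⟨G, hpure, rfl⟩ := tree_item htree
      obtain ⟨qh, hqh, rfl⟩ := hqf
      have hev : EvF q0 Δ [Itm.node none G] [stQ qh] :=
        back hsteps [Itm.node none G] (by simp)
      obtain ⟨ts, hlen, hzip, hgood, hfl⟩ := decode (sizeOf [Itm.node none G]) _ rfl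
        (by intro j hj; rw [List.mem_singleton.mp hj]; exact PureI.node hpure)
        [qh] (by simpa using hev)
      cases ts with
      | nil => simp at hlen
      | cons tht ts0 =>
        cases ts0 with
        | cons => simp at hlen
        | nil =>
          refine ⟨tht, ⟨hgood tht (by simp), qh, hqh, hzip (tht, qh) (by simp)⟩, ?_⟩
          have h2 : flF [Itm.node none G] = tau tht := by simpa using hfl
          simpa using h2.symm
    · rintro t ⟨tht, ⟨hgoodt, qh, hqhf, hrun⟩, rfl⟩
      refine ⟨good_tree (sizeOf tht) tht rfl hgoodt, ⟨stQ qh, ⟨qh, hqhf, rfl⟩, ?_⟩⟩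
      have hev := evtau (sizeOf tht) tht rfl hgoodt qh hrun
      cases tht with
      | node f ts =>
        rw [itemOf_eq] at hev
        have hacc := accept_fwd hev
        rw [← flI_itemOf (sizeOf (PreTerm.node f ts)) _ rfl, itemOf_eq]
        exact hacc

end StringTree
end

section
/- Grammar-to-automaton direction: given a regular string tree grammar G = (Σ, N, S, R) with rules nᵢ → ⟨eᵢ⟩ (i = 1, …, k), and finite string automata FAᵢ = (Σ ∪ N, Qᵢ, q₀ᵢ, Q_fᵢ, δᵢ) with pairwise disjoint state sets disjoint from Σ ∪ N, each FAᵢ recognising ⟦eᵢ⟧, the generalised FSTA with pure states A = (Σ, Q, Q_f, Q₀, Δ, γ) defined by Q = Σ ∪ N ∪ Q₁ ∪ ⋯ ∪ Q_k, Q₀ = {q₀₁, …, q₀ₖ}, Δ = δ₁ ∪ ⋯ ∪ δ_k, γ = ⋃ᵢ ⋃_{q ∈ Q_fᵢ} {q → nᵢ}, and Q_f = ⋃_{i : nᵢ = S} Q_fᵢ, recognises exactly the language generated by G: L(A) = L(G). -/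
namespace StringTree

section Machinery

variable {U : Type}

/-- An active fragment `⟨q/ s` followed by the rest `r` (the `⟩` closing the
fragment is included). -/
def frgR (q : U) (s : List U) (r : List (TSym U)) : List (TSym U) :=
  TSym.op :: TSym.ltr q :: TSym.slash :: (strOf s ++ TSym.cl :: r)

lemma strOf_cons (a : U) (s : List U) : strOf (a :: s) = TSym.ltr a :: strOf s := rfl

lemma not_slash_mem_strOf {s : List U} {x : TSym U} (hx : x ∈ strOf s) :
    x ≠ TSym.slash := by
  obtain ⟨a, -, rfl⟩ := List.mem_map.mp hx
  simp

lemma not_op_mem_strOf {s : List U} (hx : TSym.op ∈ strOf s) : False := by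
  obtain ⟨a, -, h⟩ := List.mem_map.mp hx
  cases h

/-- Cancellation: a letter string followed by `⟩` determines the split. -/
lemma strOf_cl_inj : ∀ (s s' : List U) (x y : List (TSym U)),
    strOf s ++ TSym.cl :: x = strOf s' ++ TSym.cl :: y → s = s' ∧ x = y := by
  intro s
  induction s with
  | nil =>
    intro s' x y h
    cases s' with
    | nil => simpa [strOf] using h
    | cons b s' => simp [strOf] at h
  | cons a s ih =>
    intro s' x y h
    cases s' with
    | nil => simp [strOf] at h
    | cons b s' =>
      simp only [strOf_cons, List.cons_append, List.cons.injEq] at h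
      obtain ⟨h1, h2⟩ := h
      cases h1
      obtain ⟨h3, h4⟩ := ih s' x y h2
      exact ⟨by rw [h3], h4⟩

/-- If `w ++ v = strOf s ++ ⟩ :: c` and `v` is empty or starts with `⟨`, then
the whole prefix `strOf s ++ ⟩` lies inside `w`. -/
lemma strOf_cl_prefix : ∀ (s : List U) (w v c : List (TSym U)),
    w ++ v = strOf s ++ TSym.cl :: c →
    (v = [] ∨ ∃ v', v = TSym.op :: v') →
    ∃ w', w = strOf s ++ TSym.cl :: w' ∧ c = w' ++ v := by
  intro s
  induction s with
  | nil =>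
    intro w v c h hv
    cases w with
    | nil =>
      simp only [List.nil_append] at h
      rcases hv with rfl | ⟨v', rfl⟩
      · exact absurd h (by simp [strOf])
      · simp [strOf] at h
    | cons y w =>
      simp only [strOf, List.map_nil, List.nil_append, List.cons_append,
        List.cons.injEq] at h
      obtain ⟨rfl, h2⟩ := h
      exact ⟨w, by simp [strOf], h2.symm⟩
  | cons a s ih =>
    intro w v c h hv
    cases w with
    | nil =>
      simp only [List.nil_append] at h
      rcases hv with rfl | ⟨v', rfl⟩
      · exact absurd h (by simp [strOf])
      · rw [strOf_cons] at h; exact absurd h (by simp)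
    | cons y w =>
      rw [strOf_cons] at h
      simp only [List.cons_append, List.cons.injEq] at h
      obtain ⟨rfl, h2⟩ := h
      obtain ⟨w', hw, hc⟩ := ih w v c h2 hv
      exact ⟨w', by rw [strOf_cons, hw, List.cons_append], hc⟩

/-- Well-formed configurations: every slash occurs inside a fragment
`⟨q/ s⟩` with `s` a letter string. -/
inductive WFC : List (TSym U) → Prop where
  | nil : WFC []
  | sym {x : TSym U} {c : List (TSym U)} : x ≠ TSym.slash → WFC c → WFC (x :: c)
  | frag {q : U} {s : List U} {c : List (TSym U)} : WFC c → WFC (frgR q s c)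

/-- Simulation of a configuration by a grammar sentential form, relative to a
fragment-evaluation predicate `F q s n`. -/
inductive SimF (F : U → List U → U → Prop) : List (TSym U) → List (TSym U) → Prop where
  | nil : SimF F [] []
  | sym {x : TSym U} {c v : List (TSym U)} : x ≠ TSym.slash → SimF F c v →
      SimF F (x :: c) (x :: v)
  | act {q : U} {s : List U} {n : U} {c v : List (TSym U)} : F q s n → SimF F c v →
      SimF F (frgR q s c) (TSym.ltr n :: v)

lemma WFC.append : ∀ {u v : List (TSym U)}, WFC u → WFC v → WFC (u ++ v) := by
  intro u v hu hv
  induction hu with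
  | nil => exact hv
  | sym hx _ ih => exact WFC.sym hx ih
  | frag _ ih =>
    have := WFC.frag (q := ‹_›) (s := ‹_›) ih
    simpa [frgR, List.append_assoc] using this

lemma WFC.of_noslash {u : List (TSym U)} (h : ∀ x ∈ u, x ≠ TSym.slash) : WFC u := by
  induction u with
  | nil => exact WFC.nil
  | cons x u ih =>
    exact WFC.sym (h x (by simp)) (ih fun y hy => h y (by simp [hy]))

lemma not_wfc_slash {c : List (TSym U)} : ¬ WFC (TSym.slash :: c) := by
  intro h
  cases h with
  | sym hx _ => exact hx rfl

lemma WFC.strOf_strip : ∀ (s : List U) {w : List (TSym U)}, WFC (strOf s ++ w) → WFC w := by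
  intro s
  induction s with
  | nil => intro w h; exact h
  | cons a s ih =>
    intro w h
    rw [strOf_cons, List.cons_append] at h
    cases h with
    | sym _ h' => exact ih h'

/-- Splitting a well-formed configuration at a boundary followed by `⟨`. -/
lemma wfc_split : ∀ {w : List (TSym U)}, WFC w → ∀ {u v : List (TSym U)},
    w = u ++ v → (v = [] ∨ ∃ v', v = TSym.op :: v') → WFC u ∧ WFC v := by
  intro w hw
  induction hw with
  | nil =>
    intro u v h hv
    obtain ⟨rfl, rfl⟩ := (List.append_eq_nil_iff).mp h.symm
    exact ⟨WFC.nil, WFC.nil⟩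
  | @sym x c hx hc ih =>
    intro u v h hv
    cases u with
    | nil =>
      subst h
      exact ⟨WFC.nil, WFC.sym hx hc⟩
    | cons y u =>
      simp only [List.cons_append, List.cons.injEq] at h
      obtain ⟨rfl, h2⟩ := h
      obtain ⟨h3, h4⟩ := ih h2 hv
      exact ⟨WFC.sym hx h3, h4⟩
  | @frag q s c hc ih =>
    intro u v h hv
    rcases u with _ | ⟨y, _ | ⟨z, _ | ⟨t, u⟩⟩⟩
    · subst h
      exact ⟨WFC.nil, WFC.frag hc⟩
    · rw [frgR] at h
      simp only [List.cons_append, List.nil_append, List.cons.injEq] at h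
      obtain ⟨rfl, h2⟩ := h
      rcases hv with rfl | ⟨v', rfl⟩
      · exact absurd h2 (by simp)
      · simp at h2
    · rw [frgR] at h
      simp only [List.cons_append, List.nil_append, List.cons.injEq] at h
      obtain ⟨rfl, rfl, h2⟩ := h
      rcases hv with rfl | ⟨v', rfl⟩
      · exact absurd h2 (by simp)
      · simp at h2
    · rw [frgR] at h
      simp only [List.cons_append, List.nil_append, List.cons.injEq] at h
      obtain ⟨rfl, rfl, rfl, h2⟩ := h
      obtain ⟨w', hw', hc'⟩ := strOf_cl_prefix s u v _ h2.symm hv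
      obtain ⟨h3, h4⟩ := ih hc' hv
      subst hw'
      exact ⟨WFC.frag h3, h4⟩

/-- Inversion of a well-formed fragment. -/
lemma wfc_frag_inv {q : U} {s : List U} {r : List (TSym U)}
    (h : WFC (frgR q s r)) : WFC r := by
  rw [frgR] at h
  generalize hE : strOf s ++ TSym.cl :: r = m at h
  cases h with
  | sym _ h1 =>
    cases h1 with
    | sym _ h2 =>
      cases h2 with
      | sym hx _ => exact absurd rfl hx
  | frag hc =>
    obtain ⟨h1, h2⟩ := strOf_cl_inj _ _ _ _ hE
    subst h2
    exact hc

/-- Decomposing a well-formed configuration around a pure-tree redex. -/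
lemma wfc_redex_inv {l r : List (TSym U)} {s : List U}
    (h : WFC (l ++ (TSym.op :: (strOf s ++ TSym.cl :: r)))) : WFC l ∧ WFC r := by
  obtain ⟨hl, hv⟩ := wfc_split h rfl (Or.inr ⟨_, rfl⟩)
  refine ⟨hl, ?_⟩
  generalize hE : strOf s ++ TSym.cl :: r = m at hv
  cases hv with
  | sym _ h1 =>
    subst hE
    have h2 := WFC.strOf_strip s h1
    cases h2 with
    | sym _ h3 => exact h3
  | frag hc =>
    -- impossible: `strOf s ++ ⟩…` cannot start with `ltr q' :: slash :: …`
    exfalso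
    cases s with
    | nil => simp [strOf] at hE
    | cons a s0 =>
      rw [strOf_cons] at hE
      simp only [List.cons_append, List.cons.injEq] at hE
      obtain ⟨-, h3⟩ := hE
      cases s0 with
      | nil => simp [strOf] at h3
      | cons b s1 => simp [strOf_cons] at h3

section SimLemmas

variable {F : U → List U → U → Prop}

lemma SimF.append : ∀ {u v c w : List (TSym U)}, SimF F u v → SimF F c w →
    SimF F (u ++ c) (v ++ w) := by
  intro u v c w hu hc
  induction hu with
  | nil => exact hc
  | sym hx _ ih => exact SimF.sym hx ih
  | act hF _ ih =>
    have := SimF.act hF ih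
    simpa [frgR, List.append_assoc] using this

lemma SimF.refl {u : List (TSym U)} (h : ∀ x ∈ u, x ≠ TSym.slash) : SimF F u u := by
  induction u with
  | nil => exact SimF.nil
  | cons x u ih =>
    exact SimF.sym (h x (by simp)) (ih fun y hy => h y (by simp [hy]))

lemma SimF.pure : ∀ {u v : List (TSym U)}, SimF F u v →
    (∀ x ∈ u, x ≠ TSym.slash) → v = u := by
  intro u v hu
  induction hu with
  | nil => intro; rfl
  | sym hx _ ih => intro h; rw [ih fun y hy => h y (by simp [hy])]
  | act hF _ ih =>
    intro h
    exact absurd rfl (h TSym.slash (by simp [frgR]))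

/-- Inversion of a simulated fragment. -/
lemma simF_frag_inv {q : U} {s : List U} {r w : List (TSym U)}
    (h : SimF F (frgR q s r) w) :
    ∃ n w₂, w = TSym.ltr n :: w₂ ∧ F q s n ∧ SimF F r w₂ := by
  rw [frgR] at h
  generalize hE : strOf s ++ TSym.cl :: r = m at h
  cases h with
  | sym _ h1 =>
    cases h1 with
    | sym _ h2 =>
      cases h2 with
      | sym hx _ => exact absurd rfl hx
  | @act q' s' n c v hF hc =>
    obtain ⟨h1, h2⟩ := strOf_cl_inj _ _ _ _ hE
    subst h1
    subst h2
    exact ⟨n, v, rfl, hF, hc⟩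

/-- Splitting a simulation at a boundary between two well-formed parts. -/
lemma simF_split : ∀ {u : List (TSym U)}, WFC u → ∀ {v uv w : List (TSym U)},
    uv = u ++ v → WFC v → SimF F uv w →
    ∃ w₁ w₂, w = w₁ ++ w₂ ∧ SimF F u w₁ ∧ SimF F v w₂ := by
  intro u hu
  induction hu with
  | nil =>
    intro v uv w h hv hs
    subst h
    exact ⟨[], w, rfl, SimF.nil, by simpa using hs⟩
  | @sym x c hx hc ih =>
    intro v uv w h hv hs
    subst h
    rw [List.cons_append] at hs
    generalize hE : c ++ v = m at hs
    cases hs with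
    | sym hx' hs' =>
      obtain ⟨w₁, w₂, rfl, h1, h2⟩ := ih hE.symm hv hs'
      exact ⟨_ :: w₁, w₂, rfl, SimF.sym hx' h1, h2⟩
    | @act q s n c' v' hF hs' =>
      -- the fragment starts at `x = op`; contradicts well-formedness
      exfalso
      rcases c with _ | ⟨y, _ | ⟨z, c0⟩⟩
      · rw [List.nil_append] at hE
        rw [hE] at hv
        cases hv with
        | sym _ h3 => exact not_wfc_slash h3
      · simp only [List.cons_append, List.nil_append, List.cons.injEq] at hE
        obtain ⟨rfl, h3⟩ := hE
        rw [h3] at hv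
        exact not_wfc_slash hv
      · simp only [List.cons_append, List.cons.injEq] at hE
        obtain ⟨rfl, rfl, -⟩ := hE
        cases hc with
        | sym _ h4 => exact not_wfc_slash h4
  | @frag q s c hc ih =>
    intro v uv w h hv hs
    subst h
    rw [frgR, List.cons_append, List.cons_append, List.cons_append,
      List.append_assoc, List.cons_append] at hs
    generalize hE : strOf s ++ TSym.cl :: (c ++ v) = m at hs
    cases hs with
    | sym _ h1 =>
      cases h1 with
      | sym _ h2 =>
        cases h2 with
        | sym hx' _ => exact absurd rfl hx'
    | @act q' s' n c' v' hF hs' =>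
      obtain ⟨h1, h2⟩ := strOf_cl_inj _ _ _ _ hE
      subst h1
      subst h2
      obtain ⟨w₁, w₂, rfl, h3, h4⟩ := ih rfl hv hs'
      exact ⟨TSym.ltr n :: w₁, w₂, rfl, SimF.act hF h3, h4⟩

end SimLemmas

/-! Normalised forms of the GNFSTA moves. -/

lemma gmove_init' {Q0 : Set U} {Δ : Set (U × U × U)} {γ : U → Set U}
    {a : U} (h : a ∈ Q0) (l r : List (TSym U)) (s : List U) :
    GMove Q0 Δ γ (l ++ (TSym.op :: (strOf s ++ TSym.cl :: r))) (l ++ frgR a s r) := by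
  have := GMove.init (Δ := Δ) (γ := γ) (l := l) (r := r) (s := s) h
  simpa [frgR] using this

lemma gmove_horiz' {Q0 : Set U} {Δ : Set (U × U × U)} {γ : U → Set U}
    {a b c : U} (h : (a, b, c) ∈ Δ) (l r : List (TSym U)) (s : List U) :
    GMove Q0 Δ γ (l ++ frgR a (b :: s) r) (l ++ frgR c s r) := by
  have := GMove.horiz (Q0 := Q0) (γ := γ) (l := l) (r := r) (s := s) h
  simpa [frgR, strOf_cons] using this

lemma gmove_vert' {Q0 : Set U} {Δ : Set (U × U × U)} {γ : U → Set U}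
    {a b : U} (h : b ∈ γ a) (l r : List (TSym U)) :
    GMove Q0 Δ γ (l ++ frgR a [] r) (l ++ TSym.ltr b :: r) := by
  have := GMove.vert (Q0 := Q0) (Δ := Δ) (l := l) (r := r) (a := a) (b := b) h
  simpa [frgR, strOf] using this

section Main

variable {k : ℕ} {Sa N : Set U} {S : U} {rule : Fin k → U × RegularExpression U}
  {Qi : Fin k → Set U} {q0i : Fin k → U} {Qfi : Fin k → Set U}
  {δi : Fin k → U → U → Set U}

/-- The union transition function. -/
def dU (δi : Fin k → U → U → Set U) : U → U → Set U :=
  fun q a => {p | ∃ i, p ∈ δi i q a}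

/-- Fragment evaluation: from state `q`, reading `s`, some automaton `i`
reaches a final state; the fragment evaluates to the nonterminal of rule `i`. -/
def FrOK (rule : Fin k → U × RegularExpression U) (Qfi : Fin k → Set U)
    (δi : Fin k → U → U → Set U) : U → List U → U → Prop :=
  fun q s n => ∃ i qf, (rule i).1 = n ∧ qf ∈ Qfi i ∧ FASteps (dU δi) q s qf

/-- A union run starting in `Qi j` is a run of automaton `j`. -/
lemma runLoc (hδ : ∀ i q a, δi i q a ⊆ Qi i)
    (hdom : ∀ i q a, (δi i q a).Nonempty → q ∈ Qi i ∧ a ∈ Sa ∪ N)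
    (hdisjQ : ∀ i j, i ≠ j → Disjoint (Qi i) (Qi j)) :
    ∀ {j : Fin k} {q : U} {s : List U} {qf : U}, q ∈ Qi j →
      FASteps (dU δi) q s qf →
      FASteps (δi j) q s qf ∧ qf ∈ Qi j ∧ ∀ a ∈ s, a ∈ Sa ∪ N := by
  intro j q s qf hq hrun
  induction hrun with
  | nil => exact ⟨FASteps.nil _, hq, by simp⟩
  | @cons q' a p s' qf' hp hrest ih =>
    obtain ⟨i', hp'⟩ := hp
    obtain ⟨hq', ha⟩ := hdom i' q' a ⟨p, hp'⟩
    have hij : i' = j := by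
      by_contra hne
      exact Set.disjoint_left.mp (hdisjQ i' j hne) hq' hq
    subst hij
    have hpQ : p ∈ Qi i' := hδ i' q' a hp'
    obtain ⟨h1, h2, h3⟩ := ih hpQ
    exact ⟨FASteps.cons hp' h1, h2, by
      intro x hx
      rcases List.mem_cons.mp hx with rfl | hx'
      · exact ha
      · exact h3 x hx'⟩

/-- Horizontal moves along a run of the string automaton. -/
lemma horizRun {i : Fin k} {q : U} {s : List U} {qf : U}
    (h : FASteps (δi i) q s qf) (Q0 : Set U) (γ : U → Set U)
    (l r : List (TSym U)) :
    Relation.ReflTransGen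
      (GMove Q0 {p : U × U × U | ∃ i, p.2.2 ∈ δi i p.1 p.2.1} γ)
      (l ++ frgR q s r) (l ++ frgR qf [] r) := by
  induction h with
  | nil => exact Relation.ReflTransGen.refl
  | @cons q' a p s' qf' hp _ ih =>
    exact Relation.ReflTransGen.head
      (gmove_horiz' (show (q', a, p) ∈ {p : U × U × U | ∃ i, p.2.2 ∈ δi i p.1 p.2.1}
        from ⟨i, hp⟩) l r s') ih

/-- Backward simulation step: moves of the automaton, read backwards,
correspond to grammar derivation steps on simulating sentential forms. -/
lemma backstep
    (hG : GramWF Sa N S (Set.range rule))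
    (hq0 : ∀ i, q0i i ∈ Qi i) (hQf : ∀ i, Qfi i ⊆ Qi i)
    (hδ : ∀ i q a, δi i q a ⊆ Qi i)
    (hdom : ∀ i q a, (δi i q a).Nonempty → q ∈ Qi i ∧ a ∈ Sa ∪ N)
    (hdisjQ : ∀ i j, i ≠ j → Disjoint (Qi i) (Qi j))
    (hFA : ∀ i, FALang (Sa ∪ N) (δi i) (q0i i) (Qfi i) = (rule i).2.matches')
    {c c' : List (TSym U)}
    (hm : GMove (Set.range q0i) {p : U × U × U | ∃ i, p.2.2 ∈ δi i p.1 p.2.1}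
      (fun q => {n | ∃ i, q ∈ Qfi i ∧ n = (rule i).1}) c c')
    (hw : WFC c) :
    WFC c' ∧ ∀ v', SimF (FrOK rule Qfi δi) c' v' →
      ∃ v, SimF (FrOK rule Qfi δi) c v ∧
        Relation.ReflTransGen (GDeriv (Set.range rule)) v' v := by
  cases hm with
  | @init l r s a ha =>
    have e1 : l ++ [TSym.op] ++ strOf s ++ [TSym.cl] ++ r
        = l ++ (TSym.op :: (strOf s ++ TSym.cl :: r)) := by simp
    have e2 : l ++ [TSym.op, TSym.ltr a, TSym.slash] ++ strOf s ++ [TSym.cl] ++ r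
        = l ++ frgR a s r := by simp [frgR]
    rw [e1] at hw
    rw [e2, e1]
    obtain ⟨hl, hr⟩ := wfc_redex_inv hw
    refine ⟨WFC.append hl (WFC.frag hr), ?_⟩
    intro v' hs
    obtain ⟨w₁, w₂, rfl, h1, h2⟩ := simF_split hl rfl (WFC.frag hr) hs
    obtain ⟨n, w₃, rfl, hFr, h3⟩ := simF_frag_inv h2
    obtain ⟨i₀, rfl⟩ := ha
    obtain ⟨i, qf, hn, hqf, hrun⟩ := hFr
    obtain ⟨hrun', hqfQ, hlet⟩ := runLoc hδ hdom hdisjQ (hq0 i₀) hrun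
    have hii : i = i₀ := by
      by_contra hne
      exact Set.disjoint_left.mp (hdisjQ i i₀ hne) (hQf i hqf) hqfQ
    subst hii
    have hx : s ∈ (rule i).2.matches' := by
      rw [← hFA i]
      exact ⟨hlet, qf, hqf, hrun'⟩
    refine ⟨w₁ ++ (TSym.op :: (strOf s ++ TSym.cl :: w₃)), ?_, ?_⟩
    · refine SimF.append h1 (SimF.sym (by simp) (SimF.append (SimF.refl ?_)
        (SimF.sym (by simp) h3)))
      exact fun x hx => not_slash_mem_strOf hx
    · refine Relation.ReflTransGen.single ?_
      refine ⟨w₁, w₃, n, (rule i).2, s, ?_, hx, by simp, by simp⟩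
      refine ⟨i, ?_⟩
      rw [← hn]
  | @horiz l r s a b c₀ hΔ =>
    have e1 : l ++ [TSym.op, TSym.ltr a, TSym.slash, TSym.ltr b] ++ strOf s ++ [TSym.cl] ++ r
        = l ++ frgR a (b :: s) r := by simp [frgR, strOf_cons]
    have e2 : l ++ [TSym.op, TSym.ltr c₀, TSym.slash] ++ strOf s ++ [TSym.cl] ++ r
        = l ++ frgR c₀ s r := by simp [frgR]
    rw [e1] at hw
    rw [e2, e1]
    obtain ⟨hl, hfr⟩ := wfc_split hw rfl (Or.inr ⟨_, rfl⟩)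
    have hr := wfc_frag_inv hfr
    refine ⟨WFC.append hl (WFC.frag hr), ?_⟩
    intro v' hs
    obtain ⟨w₁, w₂, rfl, h1, h2⟩ := simF_split hl rfl (WFC.frag hr) hs
    obtain ⟨n, w₃, rfl, hFr, h3⟩ := simF_frag_inv h2
    obtain ⟨i, qf, hn, hqf, hrun⟩ := hFr
    refine ⟨w₁ ++ TSym.ltr n :: w₃, ?_, Relation.ReflTransGen.refl⟩
    exact SimF.append h1 (SimF.act ⟨i, qf, hn, hqf, FASteps.cons hΔ hrun⟩ h3)
  | @vert l r a b hb =>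
    have e1 : l ++ [TSym.op, TSym.ltr a, TSym.slash, TSym.cl] ++ r
        = l ++ frgR a [] r := by simp [frgR, strOf]
    have e2 : l ++ [TSym.ltr b] ++ r = l ++ TSym.ltr b :: r := by simp
    rw [e1] at hw
    rw [e2, e1]
    obtain ⟨hl, hfr⟩ := wfc_split hw rfl (Or.inr ⟨_, rfl⟩)
    have hr := wfc_frag_inv hfr
    refine ⟨WFC.append hl (WFC.sym (by simp) hr), ?_⟩
    intro v' hs
    obtain ⟨w₁, w₂, rfl, h1, h2⟩ := simF_split hl rfl (WFC.sym (by simp) hr) hs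
    obtain ⟨j, hj1, hj2⟩ := hb
    cases h2 with
    | sym _ h3 =>
      refine ⟨w₁ ++ TSym.ltr b :: _, ?_, Relation.ReflTransGen.refl⟩
      exact SimF.append h1 (SimF.act ⟨j, a, hj2.symm, hj1, FASteps.nil a⟩ h3)

/-- Soundness: an accepted well-formed configuration is simulated by a
sentential form derivable from `S`. -/
lemma sound
    (hG : GramWF Sa N S (Set.range rule))
    (hq0 : ∀ i, q0i i ∈ Qi i) (hQf : ∀ i, Qfi i ⊆ Qi i)
    (hδ : ∀ i q a, δi i q a ⊆ Qi i)
    (hdom : ∀ i q a, (δi i q a).Nonempty → q ∈ Qi i ∧ a ∈ Sa ∪ N)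
    (hdisjQ : ∀ i j, i ≠ j → Disjoint (Qi i) (Qi j))
    (hFA : ∀ i, FALang (Sa ∪ N) (δi i) (q0i i) (Qfi i) = (rule i).2.matches')
    {t : List (TSym U)} {qf : U} (hqf : ∃ i, (rule i).1 = S ∧ qf ∈ Qfi i)
    (hsteps : Relation.ReflTransGen
      (GMove (Set.range q0i) {p : U × U × U | ∃ i, p.2.2 ∈ δi i p.1 p.2.1}
        (fun q => {n | ∃ i, q ∈ Qfi i ∧ n = (rule i).1})) t (finalTree qf)) :
    WFC t → ∃ v, SimF (FrOK rule Qfi δi) t v ∧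
      Relation.ReflTransGen (GDeriv (Set.range rule)) [TSym.ltr S] v := by
  induction hsteps using Relation.ReflTransGen.head_induction_on with
  | refl =>
    intro _
    obtain ⟨i, hi1, hi2⟩ := hqf
    refine ⟨[TSym.ltr S], ?_, Relation.ReflTransGen.refl⟩
    have : SimF (FrOK rule Qfi δi) (frgR qf [] []) [TSym.ltr S] :=
      SimF.act ⟨i, qf, hi1, hi2, FASteps.nil qf⟩ SimF.nil
    simpa [finalTree, frgR, strOf] using this
  | head hstep _ ih =>
    intro hw
    obtain ⟨hw', htrans⟩ := backstep hG hq0 hQf hδ hdom hdisjQ hFA hstep hw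
    obtain ⟨v', hsv', hdv'⟩ := ih hw'
    obtain ⟨v, hsv, hdv⟩ := htrans v' hsv'
    exact ⟨v, hsv, hdv'.trans hdv⟩

/-- One grammar derivation step is reversed by a sequence of automaton moves. -/
lemma macroStep
    (hFA : ∀ i, FALang (Sa ∪ N) (δi i) (q0i i) (Qfi i) = (rule i).2.matches')
    {u w : List (TSym U)} (h : GDeriv (Set.range rule) u w) :
    Relation.ReflTransGen
      (GMove (Set.range q0i) {p : U × U × U | ∃ i, p.2.2 ∈ δi i p.1 p.2.1}
        (fun q => {n | ∃ i, q ∈ Qfi i ∧ n = (rule i).1})) w u := by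
  obtain ⟨l, r, X, e, x, hXe, hx, rfl, rfl⟩ := h
  obtain ⟨i, hi⟩ := hXe
  have hx' : x ∈ FALang (Sa ∪ N) (δi i) (q0i i) (Qfi i) := by
    rw [hFA i, hi]
    exact hx
  obtain ⟨hlet, qf, hqf, hrun⟩ := hx'
  have e0 : l ++ (TSym.op :: (strOf x ++ [TSym.cl])) ++ r
      = l ++ (TSym.op :: (strOf x ++ TSym.cl :: r)) := by simp
  have e1 : l ++ [TSym.ltr X] ++ r = l ++ TSym.ltr X :: r := by simp
  rw [e0, e1]
  refine Relation.ReflTransGen.head (gmove_init' (Set.mem_range_self i) l r x) ?_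
  refine Relation.ReflTransGen.trans (horizRun hrun _ _ l r) ?_
  refine Relation.ReflTransGen.single (gmove_vert' ?_ l r)
  exact ⟨i, hqf, by rw [hi]⟩

/-- A full derivation is reversed by automaton moves. -/
lemma derivRev
    (hFA : ∀ i, FALang (Sa ∪ N) (δi i) (q0i i) (Qfi i) = (rule i).2.matches')
    {u t : List (TSym U)}
    (h : Relation.ReflTransGen (GDeriv (Set.range rule)) u t) :
    Relation.ReflTransGen
      (GMove (Set.range q0i) {p : U × U × U | ∃ i, p.2.2 ∈ δi i p.1 p.2.1}
        (fun q => {n | ∃ i, q ∈ Qfi i ∧ n = (rule i).1})) t u := by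
  induction h with
  | refl => exact Relation.ReflTransGen.refl
  | tail _ hstep ih => exact Relation.ReflTransGen.trans (macroStep hFA hstep) ih

end Main

/-- String trees contain no slash. -/
lemma isTree_no_slash {S' : Set (TSym U)} (hS : ∀ x ∈ S', x ≠ TSym.slash) :
    ∀ {t : List (TSym U)}, IsTree S' t → ∀ x ∈ t, x ≠ TSym.slash := by
  intro t ht
  induction ht with
  | nil => intro x hx; rcases List.mem_cons.mp hx with rfl | hx' <;> simp_all
  | single hm =>
    intro x hx
    rcases List.mem_cons.mp hx with rfl | hx'
    · simp
    · rcases List.mem_cons.mp hx' with rfl | hx''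
      · exact hS _ hm
      · simp_all
  | concat _ _ ih1 ih2 =>
    intro x hx
    rcases List.mem_cons.mp hx with rfl | hx'
    · simp
    · rcases List.mem_append.mp hx' with h' | h'
      · rcases List.mem_append.mp h' with h'' | h''
        · exact ih1 x (by simp [h''])
        · exact ih2 x (by simp [h''])
      · simp_all
  | encap _ ih =>
    intro x hx
    rcases List.mem_cons.mp hx with rfl | hx'
    · simp
    · rcases List.mem_append.mp hx' with h' | h'
      · exact ih x h'
      · simp_all

/-- String trees start with an opening bracket. -/
lemma isTree_head {S' : Set (TSym U)} {t : List (TSym U)} (ht : IsTree S' t) :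
    ∃ m, t = TSym.op :: m := by
  cases ht <;> exact ⟨_, rfl⟩

end Machinery

/-- grammar-to-automaton direction: given a regular string
tree grammar `G = (Σ, N, S, R)` with rules `nᵢ → ⟨eᵢ⟩` (`i = 1,…,k`), and
finite string automata `FAᵢ = (Σ ∪ N, Qᵢ, q₀ᵢ, Q_fᵢ, δᵢ)` with pairwise
disjoint state sets disjoint from `Σ ∪ N`, each `FAᵢ` recognising `⟦eᵢ⟧`,
the generalised FSTA with pure states `A = (Σ, Q, Q_f, Q₀, Δ, γ)` defined by
`Q = Σ ∪ N ∪ Q₁ ∪ ⋯ ∪ Q_k`, `Q₀ = {q₀₁, …, q₀ₖ}`, `Δ = δ₁ ∪ ⋯ ∪ δ_k`,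
`γ = ⋃ᵢ ⋃_{q ∈ Q_fᵢ} {q → nᵢ}` and `Q_f = ⋃_{i : nᵢ = S} Q_fᵢ` recognises
exactly the language generated by `G`. -/
theorem grammar_to_automaton {U : Type} (Sa N : Set U) (S : U)
    (hSa : Sa.Finite) (k : ℕ) (rule : Fin k → U × RegularExpression U)
    (hG : GramWF Sa N S (Set.range rule))
    (Qi : Fin k → Set U) (q0i : Fin k → U) (Qfi : Fin k → Set U)
    (δi : Fin k → U → U → Set U)
    (hQfin : ∀ i, (Qi i).Finite)
    (hq0 : ∀ i, q0i i ∈ Qi i) (hQf : ∀ i, Qfi i ⊆ Qi i)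
    (hδ : ∀ i q a, δi i q a ⊆ Qi i)
    (hdom : ∀ i q a, (δi i q a).Nonempty → q ∈ Qi i ∧ a ∈ Sa ∪ N)
    (hdisjQ : ∀ i j, i ≠ j → Disjoint (Qi i) (Qi j))
    (hdisjSN : ∀ i, Disjoint (Qi i) (Sa ∪ N))
    (hFA : ∀ i, FALang (Sa ∪ N) (δi i) (q0i i) (Qfi i) = (rule i).2.matches') :
    PureG Sa (Sa ∪ N ∪ ⋃ i, Qi i)
        {q | ∃ i, (rule i).1 = S ∧ q ∈ Qfi i}
        (Set.range q0i)
        {p : U × U × U | ∃ i, p.2.2 ∈ δi i p.1 p.2.1}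
        (fun q => {n | ∃ i, q ∈ Qfi i ∧ n = (rule i).1}) ∧
    GLang Sa (Set.range q0i)
        {p : U × U × U | ∃ i, p.2.2 ∈ δi i p.1 p.2.1}
        (fun q => {n | ∃ i, q ∈ Qfi i ∧ n = (rule i).1})
        {q | ∃ i, (rule i).1 = S ∧ q ∈ Qfi i}
      = GramLang Sa S (Set.range rule) := by
  obtain ⟨hNfin, hNSa, hSN, hR⟩ := hG
  constructor
  · -- purity
    refine ⟨?_, ?_, ?_, ?_, ?_⟩
    · rintro p ⟨i, hi⟩
      have h1 : p.1 ∈ Qi i := (hdom i p.1 p.2.1 ⟨p.2.2, hi⟩).1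
      have h2 : p.2.2 ∈ Qi i := hδ i _ _ hi
      exact ⟨fun hs => Set.disjoint_left.mp (hdisjSN i) h1 (Or.inl hs),
        fun hs => Set.disjoint_left.mp (hdisjSN i) h2 (Or.inl hs)⟩
    · intro a ha
      rw [Set.eq_empty_iff_forall_notMem]
      rintro n ⟨i, hi, -⟩
      exact Set.disjoint_left.mp (hdisjSN i) (hQf i hi) (Or.inl ha)
    · rintro q p ⟨i, -, rfl⟩
      intro hs
      exact Set.disjoint_left.mp hNSa ((hR (rule i) ⟨i, rfl⟩).1) hs
    · rintro q ⟨i, rfl⟩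
      refine ⟨Or.inr (Set.mem_iUnion.mpr ⟨i, hq0 i⟩), fun hs => ?_⟩
      exact Set.disjoint_left.mp (hdisjSN i) (hq0 i) (Or.inl hs)
    · rintro q ⟨i, -, hi⟩
      refine ⟨Or.inr (Set.mem_iUnion.mpr ⟨i, hQf i hi⟩), fun hs => ?_⟩
      exact Set.disjoint_left.mp (hdisjSN i) (hQf i hi) (Or.inl hs)
  · -- language equality
    have hG' : GramWF Sa N S (Set.range rule) := ⟨hNfin, hNSa, hSN, hR⟩
    ext t
    simp only [GLang, GramLang, GAccepts, Set.mem_setOf_eq]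
    have hnoslash : t ∈ TreeSet Sa → ∀ x ∈ t, x ≠ TSym.slash := by
      intro ht
      refine isTree_no_slash ?_ ht
      rintro x ⟨a, -, rfl⟩
      simp
    constructor
    · rintro ⟨ht, qf, hqf, hsteps⟩
      refine ⟨ht, ?_⟩
      have hw : WFC t := WFC.of_noslash (hnoslash ht)
      obtain ⟨v, hsim, hder⟩ :=
        sound hG' hq0 hQf hδ hdom hdisjQ hFA hqf hsteps hw
      rwa [SimF.pure hsim (hnoslash ht)] at hder
    · rintro ⟨ht, hder⟩
      refine ⟨ht, ?_⟩
      rcases Relation.ReflTransGen.cases_head hder with heq | ⟨v₀, hstep, hrest⟩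
      · exfalso
        obtain ⟨m, hm⟩ := isTree_head ht
        rw [← heq] at hm
        simp at hm
      · obtain ⟨l, r, X, e, x, hXe, hx, hu, rfl⟩ := hstep
        have hlr : l = [] ∧ X = S ∧ r = [] := by
          cases l with
          | nil =>
            simp only [List.nil_append, List.singleton_append, List.cons.injEq] at hu
            exact ⟨rfl, by injection hu.1.symm, hu.2.symm⟩
          | cons y l' => simp at hu
        obtain ⟨rfl, rfl, rfl⟩ := hlr
        obtain ⟨i, hi⟩ := hXe
        have hx' : x ∈ FALang (Sa ∪ N) (δi i) (q0i i) (Qfi i) := by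
          rw [hFA i, hi]
          exact hx
        obtain ⟨hlet, qf, hqf, hrun⟩ := hx'
        refine ⟨qf, ⟨i, by rw [hi], hqf⟩, ?_⟩
        refine Relation.ReflTransGen.trans (derivRev hFA hrest) ?_
        have e0 : [] ++ (TSym.op :: (strOf x ++ [TSym.cl])) ++ []
            = ([] : List (TSym U)) ++ (TSym.op :: (strOf x ++ TSym.cl :: [])) := by simp
        rw [e0]
        refine Relation.ReflTransGen.head (gmove_init' (Set.mem_range_self i) [] [] x) ?_
        have := horizRun hrun (Set.range q0i)
          (fun q => {n | ∃ i, q ∈ Qfi i ∧ n = (rule i).1}) ([] : List (TSym U)) []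
        simpa [frgR, finalTree, strOf] using this

end StringTree
end
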